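/- arXiv:1407.5769 — 11 statements merged into one kernel-verified Lean document; each statement's English description precedes it below -/
import Mathlib

section
/- Let H be a complex Hilbert space, ψ ∈ H a unit vector, and let Z_A, X_A, Z_B, X_B, Z_C, X_C, D_C be binary observables on H such that every operator in {Z_A, X_A} commutes with every operator in {Z_B, X_B, Z_C, X_C, D_C}, and every operator in {Z_B, X_B} commutes with every operator in {Z_C, X_C, D_C}. Write P_Q^0 = P⁰(Z_Q) and P_Q^1 = P¹(Z_Q) for Q ∈ {A,B,C}. Assume the statistics: ⟨ψ, P_A^0 P_B^0 P_C^1 ψ⟩ = ⟨ψ, P_A^0 P_B^1 P_C^0 ψ⟩ = ⟨ψ, P_A^1 P_B^0 P_C^0 ψ⟩ = 1/3; ⟨ψ, P_A^0 X_B X_C ψ⟩ = −⟨ψ, P_A^0 Z_B Z_C ψ⟩ = 2/3; ⟨ψ, P_A^0 X_B D_C ψ⟩ = −⟨ψ, P_A^0 Z_B D_C ψ⟩ = (1/√2)(2/3); ⟨ψ, P_A^0 X_B Z_C ψ⟩ = 0; ⟨ψ, P_B^0 X_A X_C ψ⟩ = −⟨ψ, P_B^0 Z_A Z_C ψ⟩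 = 2/3; ⟨ψ, P_B^0 X_A D_C ψ⟩ = −⟨ψ, P_B^0 Z_A D_C ψ⟩ = (1/√2)(2/3); ⟨ψ, P_B^0 X_A Z_C ψ⟩ = 0. Then, setting χ = P_A^0 P_B^0 P_C^0 X_C ψ, one has: (i) P_A^0 P_B^0 X_C P_C^1 ψ = χ, P_A^0 X_B P_B^1 P_C^0 ψ = χ, and X_A P_A^1 P_B^0 P_C^0 ψ = χ; (ii) ‖χ‖² = 1/3; (iii) P_A^a P_B^b P_C^c ψ = 0 for every (a,b,c) ∈ {0,1}³ with (a,b,c) ∉ {(0,0,1),(0,1,0),(1,0,0)}. -/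
open scoped ComplexInnerProductSpace

/-- A binary observable: a self-adjoint continuous linear map squaring to the identity. -/
structure IsBinaryObservable {H : Type*} [NormedAddCommGroup H] [InnerProductSpace ℂ H]
    [CompleteSpace H] (A : H →L[ℂ] H) : Prop where
  selfAdjoint : IsSelfAdjoint A
  mul_self_eq_one : A ∘L A = 1

/-- Projection onto the `+1` eigenspace of a binary observable. -/
noncomputable def projP0 {H : Type*} [NormedAddCommGroup H] [InnerProductSpace ℂ H]
    (Z : H →L[ℂ] H) : H →L[ℂ] H := (2 : ℂ)⁻¹ • (1 + Z)

/-- Projection onto the `−1` eigenspace of a binary observable. -/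
noncomputable def projP1 {H : Type*} [NormedAddCommGroup H] [InnerProductSpace ℂ H]
    (Z : H →L[ℂ] H) : H →L[ℂ] H := (2 : ℂ)⁻¹ • (1 - Z)

/-- Projection indexed by a bit: `false ↦ P⁰`, `true ↦ P¹`. -/
noncomputable def projBit {H : Type*} [NormedAddCommGroup H] [InnerProductSpace ℂ H]
    (Z : H →L[ℂ] H) : Bool → (H →L[ℂ] H)
  | false => projP0 Z
  | true => projP1 Z

set_option linter.unusedSectionVars false
set_option linter.unusedVariables false
set_option maxHeartbeats 1000000

namespace STW
variable {H : Type*} [NormedAddCommGroup H] [InnerProductSpace ℂ H] [CompleteSpace H]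

lemma inner_map_left {A : H →L[ℂ] H} (hA : IsSelfAdjoint A) (x y : H) :
    ⟪A x, y⟫ = ⟪x, A y⟫ := by
  rw [← ContinuousLinearMap.adjoint_inner_left A y x, hA.adjoint_eq]

lemma comm_apply {A B : H →L[ℂ] H} (h : Commute A B) (x : H) : A (B x) = B (A x) := by
  have := congrArg (fun f : H →L[ℂ] H => f x) h.eq
  simpa using this

lemma bin_sq {A : H →L[ℂ] H} (hA : IsBinaryObservable A) (x : H) : A (A x) = x := by
  have := congrArg (fun f : H →L[ℂ] H => f x) hA.mul_self_eq_one
  simpa using this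

lemma bin_inner {A : H →L[ℂ] H} (hA : IsBinaryObservable A) (x y : H) :
    ⟪A x, A y⟫ = ⟪x, y⟫ := by
  rw [inner_map_left hA.selfAdjoint, bin_sq hA]

lemma p0_apply (Z : H →L[ℂ] H) (x : H) : projP0 Z x = (2:ℂ)⁻¹ • (x + Z x) := by
  simp [projP0]

lemma p1_apply (Z : H →L[ℂ] H) (x : H) : projP1 Z x = (2:ℂ)⁻¹ • (x - Z x) := by
  simp [projP1]

lemma p0_add_p1 (Z : H →L[ℂ] H) (x : H) : projP0 Z x + projP1 Z x = x := by
  rw [p0_apply, p1_apply, ← smul_add]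
  have h : (x + Z x) + (x - Z x) = (2:ℂ) • x := by
    rw [two_smul]; abel
  rw [h, smul_smul]; norm_num

lemma p0_of_fixed {Z : H →L[ℂ] H} {y : H} (h : Z y = y) : projP0 Z y = y := by
  rw [p0_apply, h, ← two_smul ℂ y, smul_smul]; norm_num

lemma p0_of_neg {Z : H →L[ℂ] H} {y : H} (h : Z y = -y) : projP0 Z y = 0 := by
  rw [p0_apply, h]; simp

lemma p1_of_neg {Z : H →L[ℂ] H} {y : H} (h : Z y = -y) : projP1 Z y = y := by
  rw [p1_apply, h, sub_neg_eq_add, ← two_smul ℂ y, smul_smul]; norm_num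

lemma p1_of_fixed {Z : H →L[ℂ] H} {y : H} (h : Z y = y) : projP1 Z y = 0 := by
  rw [p1_apply, h]; simp

lemma Z_p0 {Z : H →L[ℂ] H} (hZ : ∀ x, Z (Z x) = x) (x : H) : Z (projP0 Z x) = projP0 Z x := by
  rw [p0_apply, map_smul, map_add, hZ, add_comm (Z x) x]

lemma Z_p1 {Z : H →L[ℂ] H} (hZ : ∀ x, Z (Z x) = x) (x : H) : Z (projP1 Z x) = -projP1 Z x := by
  rw [p1_apply, map_smul, map_sub, hZ, ← smul_neg, neg_sub]

lemma p0_comm {Z W : H →L[ℂ] H} (h : ∀ x, W (Z x) = Z (W x)) (x : H) :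
    W (projP0 Z x) = projP0 Z (W x) := by
  rw [p0_apply, p0_apply, map_smul, map_add, h]

lemma p1_comm {Z W : H →L[ℂ] H} (h : ∀ x, W (Z x) = Z (W x)) (x : H) :
    W (projP1 Z x) = projP1 Z (W x) := by
  rw [p1_apply, p1_apply, map_smul, map_sub, h]

lemma p0_sa {Z : H →L[ℂ] H} (hZ : IsSelfAdjoint Z) : IsSelfAdjoint (projP0 Z) := by
  unfold projP0
  rw [IsSelfAdjoint, star_smul, star_add, star_one, hZ.star_eq]
  norm_num

lemma p1_sa {Z : H →L[ℂ] H} (hZ : IsSelfAdjoint Z) : IsSelfAdjoint (projP1 Z) := by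
  unfold projP1
  rw [IsSelfAdjoint, star_smul, star_sub, star_one, hZ.star_eq]
  norm_num

lemma sat_eq {p q : H} {r : ℂ} (hr : (starRingEnd ℂ) r = r)
    (hp : ⟪p,p⟫ = r) (hq : ⟪q,q⟫ = r) (hpq : ⟪p,q⟫ = r) : p = q := by
  have hqp : ⟪q,p⟫ = r := by rw [← inner_conj_symm, hpq, hr]
  have h : ⟪p - q, p - q⟫ = 0 := by
    rw [inner_sub_left, inner_sub_right, inner_sub_right, hp, hq, hpq, hqp]; ring
  exact sub_eq_zero.mp (inner_self_eq_zero.mp h)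

lemma inner_triple {P Q R : H →L[ℂ] H} (ψ : H)
    (hP : IsSelfAdjoint P) (hQ : IsSelfAdjoint Q) (hR : IsSelfAdjoint R)
    (hPi : ∀ x, P (P x) = P x) (hQi : ∀ x, Q (Q x) = Q x) (hRi : ∀ x, R (R x) = R x)
    (hPQ : ∀ x, Q (P x) = P (Q x)) (hPR : ∀ x, R (P x) = P (R x))
    (hQR : ∀ x, R (Q x) = Q (R x)) :
    ⟪P (Q (R ψ)), P (Q (R ψ))⟫ = ⟪ψ, P (Q (R ψ))⟫ := by
  calc ⟪P (Q (R ψ)), P (Q (R ψ))⟫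
      = ⟪Q (R ψ), P (P (Q (R ψ)))⟫ := inner_map_left hP _ _
    _ = ⟪Q (R ψ), P (Q (R ψ))⟫ := by rw [hPi]
    _ = ⟪R ψ, Q (P (Q (R ψ)))⟫ := inner_map_left hQ _ _
    _ = ⟪R ψ, P (Q (Q (R ψ)))⟫ := by rw [hPQ]
    _ = ⟪R ψ, P (Q (R ψ))⟫ := by rw [hQi]
    _ = ⟪ψ, R (P (Q (R ψ)))⟫ := inner_map_left hR _ _
    _ = ⟪ψ, P (Q (R ψ))⟫ := by rw [hPR, hQR, hRi]

lemma inner_eig_orth {Z : H →L[ℂ] H} (hZ : IsSelfAdjoint Z) {x y : H}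
    (hx : Z x = x) (hy : Z y = -y) : ⟪x,y⟫ = 0 := by
  have h : ⟪x, y⟫ = -⟪x,y⟫ := by
    conv_lhs => rw [← hx]
    rw [inner_map_left hZ, hy, inner_neg_right]
  linear_combination (1/2 : ℂ) * h

lemma stat_conv {P M1 M2 : H →L[ℂ] H} (hP : IsSelfAdjoint P) (hPi : ∀ x, P (P x) = P x)
    (h1 : ∀ x, M1 (P x) = P (M1 x)) (h2 : ∀ x, M2 (P x) = P (M2 x)) (ψ : H) :
    ⟪P ψ, M1 (M2 (P ψ))⟫ = ⟪ψ, P (M1 (M2 ψ))⟫ := by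
  rw [h2, h1, inner_map_left hP, hPi]

end STW

namespace STW
variable {H : Type*} [NormedAddCommGroup H] [InnerProductSpace ℂ H] [CompleteSpace H]

lemma pair_block {X1 Z1 XC ZC DC : H →L[ℂ] H} {u : H}
    (hX1 : IsBinaryObservable X1) (hZ1 : IsBinaryObservable Z1)
    (hXC : IsBinaryObservable XC) (hZC : IsBinaryObservable ZC)
    (hDC : IsBinaryObservable DC)
    (cXX : ∀ x, X1 (XC x) = XC (X1 x)) (cXZ : ∀ x, X1 (ZC x) = ZC (X1 x))
    (cXD : ∀ x, X1 (DC x) = DC (X1 x)) (cZX : ∀ x, Z1 (XC x) = XC (Z1 x))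
    (cZZ : ∀ x, Z1 (ZC x) = ZC (Z1 x)) (cZD : ∀ x, Z1 (DC x) = DC (Z1 x))
    (hu : ⟪u,u⟫ = 2/3)
    (t1 : ⟪u, X1 (XC u)⟫ = 2/3) (t2 : ⟪u, Z1 (ZC u)⟫ = -(2/3))
    (t3 : ⟪u, X1 (DC u)⟫ = (Real.sqrt 2 : ℂ)⁻¹ * (2/3))
    (t4 : ⟪u, Z1 (DC u)⟫ = -((Real.sqrt 2 : ℂ)⁻¹ * (2/3)))
    (t5 : ⟪u, X1 (ZC u)⟫ = 0) :
    X1 u = XC u ∧ Z1 u = -(ZC u) ∧ XC (ZC u) + ZC (XC u) = 0 := by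
  have hr23 : (starRingEnd ℂ) (2/3 : ℂ) = 2/3 := by
    have h : ((2/3:ℝ):ℂ) = (2/3:ℂ) := by norm_num
    rw [← h, Complex.conj_ofReal]
  -- saturation 1 : u = X1 (XC u)
  have hsat1 : u = X1 (XC u) := by
    refine sat_eq hr23 hu ?_ t1
    rw [bin_inner hX1, bin_inner hXC, hu]
  have hX1u : X1 u = XC u := by
    conv_lhs => rw [hsat1, bin_sq hX1]
  -- saturation 2 : u = -(Z1 (ZC u))
  have hsat2 : u = -(Z1 (ZC u)) := by
    refine sat_eq hr23 hu ?_ ?_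
    · rw [inner_neg_neg, bin_inner hZ1, bin_inner hZC, hu]
    · rw [inner_neg_right, t2, neg_neg]
  have hZ1u : Z1 u = -(ZC u) := by
    conv_lhs => rw [hsat2]
    rw [map_neg, bin_sq hZ1]
  -- orthogonality inner products
  have hXZ0 : ⟪u, X1 (Z1 u)⟫ = 0 := by
    rw [hZ1u, map_neg, inner_neg_right, t5, neg_zero]
  have hZX0 : ⟪u, Z1 (X1 u)⟫ = 0 := by
    rw [← inner_map_left hZ1.selfAdjoint, ← inner_conj_symm, inner_map_left hX1.selfAdjoint,
      hXZ0, map_zero]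
  -- the vector w = X1 u - Z1 u and d = DC u
  set σ : ℂ := (Real.sqrt 2 : ℂ) with hσdef
  have hσ2 : σ * σ = 2 := by
    rw [hσdef, ← Complex.ofReal_mul, Real.mul_self_sqrt (by norm_num)]
    norm_num
  have hσne : σ ≠ 0 := by
    intro h; rw [h, mul_zero] at hσ2; norm_num at hσ2
  have hσconj : (starRingEnd ℂ) σ = σ := Complex.conj_ofReal _
  have hww : ⟪X1 u - Z1 u, X1 u - Z1 u⟫ = 4/3 := by
    rw [inner_sub_left, inner_sub_right, inner_sub_right,
      bin_inner hX1, bin_inner hZ1, hu,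
      inner_map_left hX1.selfAdjoint, hXZ0,
      inner_map_left hZ1.selfAdjoint, hZX0]
    ring
  have hwd : ⟪X1 u - Z1 u, DC u⟫ = σ⁻¹ * (4/3) := by
    rw [inner_sub_left, inner_map_left hX1.selfAdjoint,
      inner_map_left hZ1.selfAdjoint, t3, t4]
    ring
  have hr43 : (starRingEnd ℂ) (4/3 : ℂ) = 4/3 := by
    have h : ((4/3:ℝ):ℂ) = (4/3:ℂ) := by norm_num
    rw [← h, Complex.conj_ofReal]
  have hsat3 : X1 u - Z1 u = σ • DC u := by
    refine sat_eq hr43 hww ?_ ?_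
    · rw [inner_smul_left, inner_smul_right, bin_inner hDC, hu, hσconj, ← mul_assoc, hσ2]
      norm_num
    · rw [inner_smul_right, hwd, ← mul_assoc, mul_inv_cancel₀ hσne, one_mul]
  have hdw : DC u = σ⁻¹ • (X1 u - Z1 u) := by
    rw [hsat3, smul_smul, inv_mul_cancel₀ hσne, one_smul]
  -- apply DC to hsat3
  have happ : DC (X1 u) - DC (Z1 u) = σ • u := by
    have := congrArg (fun t => DC t) hsat3
    simpa [map_sub, map_smul, bin_sq hDC] using this
  have happ2 : σ⁻¹ • (u - X1 (Z1 u)) - σ⁻¹ • (Z1 (X1 u) - u) = σ • u := by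
    rw [← happ, ← cXD u, ← cZD u, hdw, map_smul, map_smul, map_sub, map_sub, bin_sq hX1,
      bin_sq hZ1]
  have hNB : X1 (Z1 u) + Z1 (X1 u) = 0 := by
    have h3 := congrArg (fun t => σ • t) happ2
    simp only [smul_sub, smul_smul, mul_inv_cancel₀ hσne, one_smul, hσ2] at h3
    -- h3 : (u - X1 (Z1 u)) - (Z1 (X1 u) - u) = (2:ℂ) • u
    rw [two_smul] at h3
    have h4 : (u + u) - (X1 (Z1 u) + Z1 (X1 u)) = u + u := by
      conv_rhs => rw [← h3]
      abel
    exact sub_eq_self.mp h4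
  -- transfer to party C
  have e1 : X1 (Z1 u) = -(ZC (XC u)) := by
    rw [hZ1u, map_neg, cXZ, hX1u]
  have e2 : Z1 (X1 u) = -(XC (ZC u)) := by
    rw [hX1u, cZX, hZ1u, map_neg]
  refine ⟨hX1u, hZ1u, ?_⟩
  rw [e1, e2] at hNB
  have := congrArg (fun t => -t) hNB
  simpa [add_comm] using this

end STW


namespace STW
variable {H : Type*} [NormedAddCommGroup H] [InnerProductSpace ℂ H] [CompleteSpace H]

lemma projBit_comm {Z W : H →L[ℂ] H} (h : ∀ x, W (Z x) = Z (W x)) (j : Bool) (x : H) :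
    W (projBit Z j x) = projBit Z j (W x) := by
  cases j
  · exact p0_comm h x
  · exact p1_comm h x

lemma projBit_projBit_comm {Z W : H →L[ℂ] H} (h : ∀ x, W (Z x) = Z (W x)) (i j : Bool)
    (x : H) : projBit W j (projBit Z i x) = projBit Z i (projBit W j x) :=
  projBit_comm (fun y => (projBit_comm (fun z => (h z).symm) j y).symm) i x

lemma projBit_sa {Z : H →L[ℂ] H} (hZ : IsSelfAdjoint Z) (j : Bool) :
    IsSelfAdjoint (projBit Z j) := by
  cases j
  · exact p0_sa hZ
  · exact p1_sa hZ

lemma projBit_idem {Z : H →L[ℂ] H} (hsq : ∀ x, Z (Z x) = x) (j : Bool) (x : H) :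
    projBit Z j (projBit Z j x) = projBit Z j x := by
  cases j
  · exact p0_of_fixed (Z_p0 hsq x)
  · exact p1_of_neg (Z_p1 hsq x)

lemma projBit_split (Z : H →L[ℂ] H) (x : H) : projBit Z false x + projBit Z true x = x :=
  p0_add_p1 Z x

end STW

theorem stmt0 {H : Type*} [NormedAddCommGroup H] [InnerProductSpace ℂ H] [CompleteSpace H]
    (ψ : H) (hψ : ‖ψ‖ = 1)
    (ZA XA ZB XB ZC XC DC : H →L[ℂ] H)
    (hZA : IsBinaryObservable ZA) (hXA : IsBinaryObservable XA)
    (hZB : IsBinaryObservable ZB) (hXB : IsBinaryObservable XB)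
    (hZC : IsBinaryObservable ZC) (hXC : IsBinaryObservable XC)
    (hDC : IsBinaryObservable DC)
    (hAcomm : ∀ P ∈ [ZA, XA], ∀ Q ∈ [ZB, XB, ZC, XC, DC], Commute P Q)
    (hBcomm : ∀ P ∈ [ZB, XB], ∀ Q ∈ [ZC, XC, DC], Commute P Q)
    -- statistics (9)-(11) of the paper
    (s1 : ⟪ψ, projP0 ZA (projP0 ZB (projP1 ZC ψ))⟫ = 1/3)
    (s2 : ⟪ψ, projP0 ZA (projP1 ZB (projP0 ZC ψ))⟫ = 1/3)
    (s3 : ⟪ψ, projP1 ZA (projP0 ZB (projP0 ZC ψ))⟫ = 1/3)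
    (s4 : ⟪ψ, projP0 ZA (XB (XC ψ))⟫ = 2/3)
    (s5 : ⟪ψ, projP0 ZA (ZB (ZC ψ))⟫ = -(2/3))
    (s6 : ⟪ψ, projP0 ZA (XB (DC ψ))⟫ = (Real.sqrt 2 : ℂ)⁻¹ * (2/3))
    (s7 : ⟪ψ, projP0 ZA (ZB (DC ψ))⟫ = -((Real.sqrt 2 : ℂ)⁻¹ * (2/3)))
    (s8 : ⟪ψ, projP0 ZA (XB (ZC ψ))⟫ = 0)
    (s9 : ⟪ψ, projP0 ZB (XA (XC ψ))⟫ = 2/3)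
    (s10 : ⟪ψ, projP0 ZB (ZA (ZC ψ))⟫ = -(2/3))
    (s11 : ⟪ψ, projP0 ZB (XA (DC ψ))⟫ = (Real.sqrt 2 : ℂ)⁻¹ * (2/3))
    (s12 : ⟪ψ, projP0 ZB (ZA (DC ψ))⟫ = -((Real.sqrt 2 : ℂ)⁻¹ * (2/3)))
    (s13 : ⟪ψ, projP0 ZB (XA (ZC ψ))⟫ = 0) :
    -- with χ = P_A^0 P_B^0 P_C^0 X_C ψ :
    (projP0 ZA (projP0 ZB (XC (projP1 ZC ψ))) = projP0 ZA (projP0 ZB (projP0 ZC (XC ψ))) ∧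
     projP0 ZA (XB (projP1 ZB (projP0 ZC ψ))) = projP0 ZA (projP0 ZB (projP0 ZC (XC ψ))) ∧
     XA (projP1 ZA (projP0 ZB (projP0 ZC ψ))) = projP0 ZA (projP0 ZB (projP0 ZC (XC ψ)))) ∧
    ‖projP0 ZA (projP0 ZB (projP0 ZC (XC ψ)))‖ ^ 2 = 1/3 ∧
    (∀ a b c : Bool,
      (a, b, c) ∉ ({(false, false, true), (false, true, false), (true, false, false)} :
        Set (Bool × Bool × Bool)) →
      projBit ZA a (projBit ZB b (projBit ZC c ψ)) = 0) := by
  -- basic commutation facts, at the level of applications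
  have cZAZB : ∀ x, ZA (ZB x) = ZB (ZA x) := STW.comm_apply (hAcomm ZA (by simp) ZB (by simp))
  have cZAXB : ∀ x, ZA (XB x) = XB (ZA x) := STW.comm_apply (hAcomm ZA (by simp) XB (by simp))
  have cZAZC : ∀ x, ZA (ZC x) = ZC (ZA x) := STW.comm_apply (hAcomm ZA (by simp) ZC (by simp))
  have cZAXC : ∀ x, ZA (XC x) = XC (ZA x) := STW.comm_apply (hAcomm ZA (by simp) XC (by simp))
  have cZADC : ∀ x, ZA (DC x) = DC (ZA x) := STW.comm_apply (hAcomm ZA (by simp) DC (by simp))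
  have cXAZB : ∀ x, XA (ZB x) = ZB (XA x) := STW.comm_apply (hAcomm XA (by simp) ZB (by simp))
  have cXAZC : ∀ x, XA (ZC x) = ZC (XA x) := STW.comm_apply (hAcomm XA (by simp) ZC (by simp))
  have cXAXC : ∀ x, XA (XC x) = XC (XA x) := STW.comm_apply (hAcomm XA (by simp) XC (by simp))
  have cXADC : ∀ x, XA (DC x) = DC (XA x) := STW.comm_apply (hAcomm XA (by simp) DC (by simp))
  have cZBZC : ∀ x, ZB (ZC x) = ZC (ZB x) := STW.comm_apply (hBcomm ZB (by simp) ZC (by simp))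
  have cZBXC : ∀ x, ZB (XC x) = XC (ZB x) := STW.comm_apply (hBcomm ZB (by simp) XC (by simp))
  have cZBDC : ∀ x, ZB (DC x) = DC (ZB x) := STW.comm_apply (hBcomm ZB (by simp) DC (by simp))
  have cXBZC : ∀ x, XB (ZC x) = ZC (XB x) := STW.comm_apply (hBcomm XB (by simp) ZC (by simp))
  have cXBXC : ∀ x, XB (XC x) = XC (XB x) := STW.comm_apply (hBcomm XB (by simp) XC (by simp))
  have cXBDC : ∀ x, XB (DC x) = DC (XB x) := STW.comm_apply (hBcomm XB (by simp) DC (by simp))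
  have sqZA := STW.bin_sq hZA
  have sqZB := STW.bin_sq hZB
  have sqZC := STW.bin_sq hZC
  -- abbreviations for the three surviving components
  set va := projP0 ZA (projP0 ZB (projP1 ZC ψ)) with hva
  set vb := projP0 ZA (projP1 ZB (projP0 ZC ψ)) with hvb
  set vc := projP1 ZA (projP0 ZB (projP0 ZC ψ)) with hvc
  ------------------------------------------------------------------
  -- Part (iii) : vanishing of the five components
  ------------------------------------------------------------------
  have saA := STW.projBit_sa (Z := ZA) hZA.selfAdjoint
  have saB := STW.projBit_sa (Z := ZB) hZB.selfAdjoint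
  have saC := STW.projBit_sa (Z := ZC) hZC.selfAdjoint
  have idA := STW.projBit_idem (Z := ZA) sqZA
  have idB := STW.projBit_idem (Z := ZB) sqZB
  have idC := STW.projBit_idem (Z := ZC) sqZC
  have pAB := STW.projBit_projBit_comm (Z := ZA) (W := ZB) (fun x => (cZAZB x).symm)
  have pAC := STW.projBit_projBit_comm (Z := ZA) (W := ZC) (fun x => (cZAZC x).symm)
  have pBC := STW.projBit_projBit_comm (Z := ZB) (W := ZC) (fun x => (cZBZC x).symm)
  have tri : ∀ i j k : Bool,
      ⟪projBit ZA i (projBit ZB j (projBit ZC k ψ)), projBit ZA i (projBit ZB j (projBit ZC k ψ))⟫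
        = ⟪ψ, projBit ZA i (projBit ZB j (projBit ZC k ψ))⟫ :=
    fun i j k => STW.inner_triple ψ (saA i) (saB j) (saC k) (idA i) (idB j) (idC k)
      (pAB i j) (pAC i k) (pBC j k)
  have hq : ∀ i j k : Bool,
      ⟪ψ, projBit ZA i (projBit ZB j (projBit ZC k ψ))⟫
        = ((‖projBit ZA i (projBit ZB j (projBit ZC k ψ))‖ ^ 2 : ℝ) : ℂ) := by
    intro i j k
    rw [← tri i j k, inner_self_eq_norm_sq_to_K]
    norm_cast
  have hAsum : ∀ x, projBit ZA false x + projBit ZA true x = x := STW.projBit_split ZA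
  have hBsum : ∀ x, projBit ZB false x + projBit ZB true x = x := STW.projBit_split ZB
  have hCsum : ∀ x, projBit ZC false x + projBit ZC true x = x := STW.projBit_split ZC
  have e1 : ∀ i j, projBit ZA i (projBit ZB j (projBit ZC false ψ))
      + projBit ZA i (projBit ZB j (projBit ZC true ψ)) = projBit ZA i (projBit ZB j ψ) := by
    intro i j
    rw [← map_add, ← map_add, hCsum]
  have e2 : ∀ i, projBit ZA i (projBit ZB false ψ) + projBit ZA i (projBit ZB true ψ)
      = projBit ZA i ψ := by
    intro i
    rw [← map_add, hBsum]
  have hsum : ((projBit ZA false (projBit ZB false (projBit ZC false ψ))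
        + projBit ZA false (projBit ZB false (projBit ZC true ψ)))
      + (projBit ZA false (projBit ZB true (projBit ZC false ψ))
        + projBit ZA false (projBit ZB true (projBit ZC true ψ))))
      + ((projBit ZA true (projBit ZB false (projBit ZC false ψ))
        + projBit ZA true (projBit ZB false (projBit ZC true ψ)))
      + (projBit ZA true (projBit ZB true (projBit ZC false ψ))
        + projBit ZA true (projBit ZB true (projBit ZC true ψ)))) = ψ := by
    rw [e1, e1, e1, e1, e2, e2, hAsum]
  have hone : ⟪ψ, ψ⟫ = (1 : ℂ) := by
    rw [inner_self_eq_norm_sq_to_K, hψ]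
    norm_num
  have ca : projBit ZA false (projBit ZB false (projBit ZC true ψ)) = va := rfl
  have cb : projBit ZA false (projBit ZB true (projBit ZC false ψ)) = vb := rfl
  have cc : projBit ZA true (projBit ZB false (projBit ZC false ψ)) = vc := rfl
  have hexp := congrArg (fun t => (⟪ψ, t⟫ : ℂ)) hsum
  simp only [inner_add_right] at hexp
  rw [hone] at hexp
  rw [hq false false false, hq false true true, hq true false true, hq true true false,
    hq true true true] at hexp
  rw [ca, cb, cc, s1, s2, s3] at hexp
  have hreal : (‖projBit ZA false (projBit ZB false (projBit ZC false ψ))‖ ^ 2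
      + ‖projBit ZA false (projBit ZB true (projBit ZC true ψ))‖ ^ 2
      + ‖projBit ZA true (projBit ZB false (projBit ZC true ψ))‖ ^ 2
      + ‖projBit ZA true (projBit ZB true (projBit ZC false ψ))‖ ^ 2
      + ‖projBit ZA true (projBit ZB true (projBit ZC true ψ))‖ ^ 2 : ℝ) = 0 := by
    have hc : ((‖projBit ZA false (projBit ZB false (projBit ZC false ψ))‖ ^ 2
        + ‖projBit ZA false (projBit ZB true (projBit ZC true ψ))‖ ^ 2
        + ‖projBit ZA true (projBit ZB false (projBit ZC true ψ))‖ ^ 2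
        + ‖projBit ZA true (projBit ZB true (projBit ZC false ψ))‖ ^ 2
        + ‖projBit ZA true (projBit ZB true (projBit ZC true ψ))‖ ^ 2 : ℝ) : ℂ) = 0 := by
      push_cast at hexp ⊢
      linear_combination hexp
    exact_mod_cast hc
  have hz000 : projBit ZA false (projBit ZB false (projBit ZC false ψ)) = 0 := by
    have h : ‖projBit ZA false (projBit ZB false (projBit ZC false ψ))‖ ^ 2 = 0 := by
      nlinarith [hreal, sq_nonneg ‖projBit ZA false (projBit ZB true (projBit ZC true ψ))‖,
        sq_nonneg ‖projBit ZA true (projBit ZB false (projBit ZC true ψ))‖,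
        sq_nonneg ‖projBit ZA true (projBit ZB true (projBit ZC false ψ))‖,
        sq_nonneg ‖projBit ZA true (projBit ZB true (projBit ZC true ψ))‖]
    exact norm_eq_zero.mp ((pow_eq_zero_iff (by norm_num : (2:ℕ) ≠ 0)).mp h)
  have hz011 : projBit ZA false (projBit ZB true (projBit ZC true ψ)) = 0 := by
    have h : ‖projBit ZA false (projBit ZB true (projBit ZC true ψ))‖ ^ 2 = 0 := by
      nlinarith [hreal, sq_nonneg ‖projBit ZA false (projBit ZB false (projBit ZC false ψ))‖,
        sq_nonneg ‖projBit ZA true (projBit ZB false (projBit ZC true ψ))‖,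
        sq_nonneg ‖projBit ZA true (projBit ZB true (projBit ZC false ψ))‖,
        sq_nonneg ‖projBit ZA true (projBit ZB true (projBit ZC true ψ))‖]
    exact norm_eq_zero.mp ((pow_eq_zero_iff (by norm_num : (2:ℕ) ≠ 0)).mp h)
  have hz101 : projBit ZA true (projBit ZB false (projBit ZC true ψ)) = 0 := by
    have h : ‖projBit ZA true (projBit ZB false (projBit ZC true ψ))‖ ^ 2 = 0 := by
      nlinarith [hreal, sq_nonneg ‖projBit ZA false (projBit ZB false (projBit ZC false ψ))‖,
        sq_nonneg ‖projBit ZA false (projBit ZB true (projBit ZC true ψ))‖,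
        sq_nonneg ‖projBit ZA true (projBit ZB true (projBit ZC false ψ))‖,
        sq_nonneg ‖projBit ZA true (projBit ZB true (projBit ZC true ψ))‖]
    exact norm_eq_zero.mp ((pow_eq_zero_iff (by norm_num : (2:ℕ) ≠ 0)).mp h)
  have hz110 : projBit ZA true (projBit ZB true (projBit ZC false ψ)) = 0 := by
    have h : ‖projBit ZA true (projBit ZB true (projBit ZC false ψ))‖ ^ 2 = 0 := by
      nlinarith [hreal, sq_nonneg ‖projBit ZA false (projBit ZB false (projBit ZC false ψ))‖,
        sq_nonneg ‖projBit ZA false (projBit ZB true (projBit ZC true ψ))‖,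
        sq_nonneg ‖projBit ZA true (projBit ZB false (projBit ZC true ψ))‖,
        sq_nonneg ‖projBit ZA true (projBit ZB true (projBit ZC true ψ))‖]
    exact norm_eq_zero.mp ((pow_eq_zero_iff (by norm_num : (2:ℕ) ≠ 0)).mp h)
  have hz111 : projBit ZA true (projBit ZB true (projBit ZC true ψ)) = 0 := by
    have h : ‖projBit ZA true (projBit ZB true (projBit ZC true ψ))‖ ^ 2 = 0 := by
      nlinarith [hreal, sq_nonneg ‖projBit ZA false (projBit ZB false (projBit ZC false ψ))‖,
        sq_nonneg ‖projBit ZA false (projBit ZB true (projBit ZC true ψ))‖,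
        sq_nonneg ‖projBit ZA true (projBit ZB false (projBit ZC true ψ))‖,
        sq_nonneg ‖projBit ZA true (projBit ZB true (projBit ZC false ψ))‖]
    exact norm_eq_zero.mp ((pow_eq_zero_iff (by norm_num : (2:ℕ) ≠ 0)).mp h)
  -- the state decomposes onto the three surviving components
  have hsum2 := hsum
  rw [ca, cb, cc, hz000, hz011, hz101, hz110, hz111] at hsum2
  have hψ3 : va + vb + vc = ψ := by
    rw [← hsum2]
    abel
  ------------------------------------------------------------------
  -- eigenvector facts
  ------------------------------------------------------------------
  have hZAva : ZA va = va := by rw [hva]; exact STW.Z_p0 sqZA _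
  have hZBva : ZB va = va := by
    rw [hva, STW.p0_comm (fun x => (cZAZB x).symm), STW.Z_p0 sqZB]
  have hZCva : ZC va = -va := by
    rw [hva, STW.p0_comm (fun x => (cZAZC x).symm), STW.p0_comm (fun x => (cZBZC x).symm),
      STW.Z_p1 sqZC, map_neg, map_neg]
  have hZAvb : ZA vb = vb := by rw [hvb]; exact STW.Z_p0 sqZA _
  have hZBvb : ZB vb = -vb := by
    rw [hvb, STW.p0_comm (fun x => (cZAZB x).symm), STW.Z_p1 sqZB, map_neg]
  have hZCvb : ZC vb = vb := by
    rw [hvb, STW.p0_comm (fun x => (cZAZC x).symm), STW.p1_comm (fun x => (cZBZC x).symm),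
      STW.Z_p0 sqZC]
  have hZAvc : ZA vc = -vc := by rw [hvc, STW.Z_p1 sqZA]
  have hZBvc : ZB vc = vc := by
    rw [hvc, STW.p1_comm (fun x => (cZAZB x).symm), STW.Z_p0 sqZB]
  have hZCvc : ZC vc = vc := by
    rw [hvc, STW.p1_comm (fun x => (cZAZC x).symm), STW.p0_comm (fun x => (cZBZC x).symm),
      STW.Z_p0 sqZC]
  ------------------------------------------------------------------
  -- norms and orthogonality
  ------------------------------------------------------------------
  have tri_a := tri false false true
  rw [ca] at tri_a
  have hva13 : ⟪va, va⟫ = (1/3 : ℂ) := by rw [tri_a, s1]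
  have tri_b := tri false true false
  rw [cb] at tri_b
  have hvb13 : ⟪vb, vb⟫ = (1/3 : ℂ) := by rw [tri_b, s2]
  have tri_c := tri true false false
  rw [cc] at tri_c
  have hvc13 : ⟪vc, vc⟫ = (1/3 : ℂ) := by rw [tri_c, s3]
  have hab : ⟪va, vb⟫ = 0 := STW.inner_eig_orth hZB.selfAdjoint hZBva hZBvb
  have hac : ⟪va, vc⟫ = 0 := STW.inner_eig_orth hZA.selfAdjoint hZAva hZAvc
  have hba : ⟪vb, va⟫ = 0 := by rw [← inner_conj_symm, hab, map_zero]
  have hca : ⟪vc, va⟫ = 0 := by rw [← inner_conj_symm, hac, map_zero]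
  have hu3 : projP0 ZA ψ = va + vb := by
    conv_lhs => rw [← hψ3]
    rw [map_add, map_add, STW.p0_of_fixed hZAva, STW.p0_of_fixed hZAvb, STW.p0_of_neg hZAvc,
      add_zero]
  have hv3 : projP0 ZB ψ = va + vc := by
    conv_lhs => rw [← hψ3]
    rw [map_add, map_add, STW.p0_of_fixed hZBva, STW.p0_of_neg hZBvb, STW.p0_of_fixed hZBvc,
      add_zero]
  have huu : ⟪projP0 ZA ψ, projP0 ZA ψ⟫ = (2/3 : ℂ) := by
    rw [hu3, inner_add_left, inner_add_right, inner_add_right, hva13, hvb13, hab, hba]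
    norm_num
  have hvv : ⟪projP0 ZB ψ, projP0 ZB ψ⟫ = (2/3 : ℂ) := by
    rw [hv3, inner_add_left, inner_add_right, inner_add_right, hva13, hvc13, hac, hca]
    norm_num
  ------------------------------------------------------------------
  -- statistics for the restricted states
  ------------------------------------------------------------------
  have saA0 : IsSelfAdjoint (projP0 ZA) := STW.p0_sa hZA.selfAdjoint
  have saB0 : IsSelfAdjoint (projP0 ZB) := STW.p0_sa hZB.selfAdjoint
  have idA0 : ∀ x, projP0 ZA (projP0 ZA x) = projP0 ZA x :=
    fun x => STW.p0_of_fixed (STW.Z_p0 sqZA x)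
  have idB0 : ∀ x, projP0 ZB (projP0 ZB x) = projP0 ZB x :=
    fun x => STW.p0_of_fixed (STW.Z_p0 sqZB x)
  have mXB_A : ∀ x, XB (projP0 ZA x) = projP0 ZA (XB x) :=
    STW.p0_comm (fun x => (cZAXB x).symm)
  have mZB_A : ∀ x, ZB (projP0 ZA x) = projP0 ZA (ZB x) :=
    STW.p0_comm (fun x => (cZAZB x).symm)
  have mXC_A : ∀ x, XC (projP0 ZA x) = projP0 ZA (XC x) :=
    STW.p0_comm (fun x => (cZAXC x).symm)
  have mZC_A : ∀ x, ZC (projP0 ZA x) = projP0 ZA (ZC x) :=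
    STW.p0_comm (fun x => (cZAZC x).symm)
  have mDC_A : ∀ x, DC (projP0 ZA x) = projP0 ZA (DC x) :=
    STW.p0_comm (fun x => (cZADC x).symm)
  have mXA_B : ∀ x, XA (projP0 ZB x) = projP0 ZB (XA x) := STW.p0_comm cXAZB
  have mZA_B : ∀ x, ZA (projP0 ZB x) = projP0 ZB (ZA x) := STW.p0_comm cZAZB
  have mXC_B : ∀ x, XC (projP0 ZB x) = projP0 ZB (XC x) :=
    STW.p0_comm (fun x => (cZBXC x).symm)
  have mZC_B : ∀ x, ZC (projP0 ZB x) = projP0 ZB (ZC x) :=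
    STW.p0_comm (fun x => (cZBZC x).symm)
  have mDC_B : ∀ x, DC (projP0 ZB x) = projP0 ZB (DC x) :=
    STW.p0_comm (fun x => (cZBDC x).symm)
  have cs4 : ⟪projP0 ZA ψ, XB (XC (projP0 ZA ψ))⟫ = (2/3 : ℂ) := by
    rw [STW.stat_conv saA0 idA0 mXB_A mXC_A ψ, s4]
  have cs5 : ⟪projP0 ZA ψ, ZB (ZC (projP0 ZA ψ))⟫ = -(2/3 : ℂ) := by
    rw [STW.stat_conv saA0 idA0 mZB_A mZC_A ψ, s5]
  have cs6 : ⟪projP0 ZA ψ, XB (DC (projP0 ZA ψ))⟫ = (Real.sqrt 2 : ℂ)⁻¹ * (2/3) := by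
    rw [STW.stat_conv saA0 idA0 mXB_A mDC_A ψ, s6]
  have cs7 : ⟪projP0 ZA ψ, ZB (DC (projP0 ZA ψ))⟫ = -((Real.sqrt 2 : ℂ)⁻¹ * (2/3)) := by
    rw [STW.stat_conv saA0 idA0 mZB_A mDC_A ψ, s7]
  have cs8 : ⟪projP0 ZA ψ, XB (ZC (projP0 ZA ψ))⟫ = 0 := by
    rw [STW.stat_conv saA0 idA0 mXB_A mZC_A ψ, s8]
  have cs9 : ⟪projP0 ZB ψ, XA (XC (projP0 ZB ψ))⟫ = (2/3 : ℂ) := by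
    rw [STW.stat_conv saB0 idB0 mXA_B mXC_B ψ, s9]
  have cs10 : ⟪projP0 ZB ψ, ZA (ZC (projP0 ZB ψ))⟫ = -(2/3 : ℂ) := by
    rw [STW.stat_conv saB0 idB0 mZA_B mZC_B ψ, s10]
  have cs11 : ⟪projP0 ZB ψ, XA (DC (projP0 ZB ψ))⟫ = (Real.sqrt 2 : ℂ)⁻¹ * (2/3) := by
    rw [STW.stat_conv saB0 idB0 mXA_B mDC_B ψ, s11]
  have cs12 : ⟪projP0 ZB ψ, ZA (DC (projP0 ZB ψ))⟫ = -((Real.sqrt 2 : ℂ)⁻¹ * (2/3)) := by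
    rw [STW.stat_conv saB0 idB0 mZA_B mDC_B ψ, s12]
  have cs13 : ⟪projP0 ZB ψ, XA (ZC (projP0 ZB ψ))⟫ = 0 := by
    rw [STW.stat_conv saB0 idB0 mXA_B mZC_B ψ, s13]
  ------------------------------------------------------------------
  -- the two Mayers-Yao style blocks
  ------------------------------------------------------------------
  obtain ⟨hXBu, hZBu, hNCu⟩ := STW.pair_block hXB hZB hXC hZC hDC cXBXC cXBZC cXBDC
    cZBXC cZBZC cZBDC huu cs4 cs5 cs6 cs7 cs8
  obtain ⟨hXAv, hZAv, hNCv⟩ := STW.pair_block hXA hZA hXC hZC hDC cXAXC cXAZC cXADC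
    cZAXC cZAZC cZADC hvv cs9 cs10 cs11 cs12 cs13
  ------------------------------------------------------------------
  -- localized anticommutation : the key relations hG1, hG2, hG3
  ------------------------------------------------------------------
  have hn1 : ZC (XC (projP0 ZA ψ)) = -(XC (ZC (projP0 ZA ψ))) :=
    eq_neg_of_add_eq_zero_right hNCu
  have hn1' : XC (ZC (projP0 ZA ψ)) = -(ZC (XC (projP0 ZA ψ))) :=
    eq_neg_of_add_eq_zero_left hNCu
  have hn2 : ZC (XC (ZC (projP0 ZA ψ))) = -(XC (projP0 ZA ψ)) := by
    rw [hn1', map_neg, sqZC]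
  have hZCu : ZC (projP0 ZA ψ) = -va + vb := by
    rw [hu3, map_add, hZCva, hZCvb]
  have hXCva : XC va = (2:ℂ)⁻¹ • (XC (projP0 ZA ψ) - XC (ZC (projP0 ZA ψ))) := by
    have hva2 : va = (2:ℂ)⁻¹ • (projP0 ZA ψ - ZC (projP0 ZA ψ)) := by
      rw [hZCu, hu3]
      module
    rw [hva2, map_smul, map_sub]
  have hG1 : ZC (XC va) = XC va := by
    rw [hXCva, map_smul, map_sub, hn1, hn2]
    module
  have hXCvb : XC vb = (2:ℂ)⁻¹ • (XC (projP0 ZA ψ) + XC (ZC (projP0 ZA ψ))) := by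
    have hvb2 : vb = (2:ℂ)⁻¹ • (projP0 ZA ψ + ZC (projP0 ZA ψ)) := by
      rw [hZCu, hu3]
      module
    rw [hvb2, map_smul, map_add]
  have hG2 : ZC (XC vb) = -(XC vb) := by
    rw [hXCvb, map_smul, map_add, hn1, hn2]
    module
  have hn1v : ZC (XC (projP0 ZB ψ)) = -(XC (ZC (projP0 ZB ψ))) :=
    eq_neg_of_add_eq_zero_right hNCv
  have hn1v' : XC (ZC (projP0 ZB ψ)) = -(ZC (XC (projP0 ZB ψ))) :=
    eq_neg_of_add_eq_zero_left hNCv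
  have hn2v : ZC (XC (ZC (projP0 ZB ψ))) = -(XC (projP0 ZB ψ)) := by
    rw [hn1v', map_neg, sqZC]
  have hZCv : ZC (projP0 ZB ψ) = -va + vc := by
    rw [hv3, map_add, hZCva, hZCvc]
  have hXCvc : XC vc = (2:ℂ)⁻¹ • (XC (projP0 ZB ψ) + XC (ZC (projP0 ZB ψ))) := by
    have hvc2 : vc = (2:ℂ)⁻¹ • (projP0 ZB ψ + ZC (projP0 ZB ψ)) := by
      rw [hZCv, hv3]
      module
    rw [hvc2, map_smul, map_add]
  have hG3 : ZC (XC vc) = -(XC vc) := by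
    rw [hXCvc, map_smul, map_add, hn1v, hn2v]
    module
  ------------------------------------------------------------------
  -- key transfers : XB vb = XC va and XA vc = XC va
  ------------------------------------------------------------------
  have h8 : XB va + XB vb = XC va + XC vb := by
    have h := hXBu
    rw [hu3, map_add, map_add] at h
    exact h
  have hkeyB : XB vb = XC va := by
    have h := congrArg (fun t => projP0 ZC t) h8
    simp only [map_add] at h
    rw [← STW.p0_comm cXBZC va, ← STW.p0_comm cXBZC vb, STW.p0_of_neg hZCva,
      STW.p0_of_fixed hZCvb, map_zero, zero_add, STW.p0_of_fixed hG1, STW.p0_of_neg hG2,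
      add_zero] at h
    exact h
  have h9 : XA va + XA vc = XC va + XC vc := by
    have h := hXAv
    rw [hv3, map_add, map_add] at h
    exact h
  have hkeyA : XA vc = XC va := by
    have h := congrArg (fun t => projP0 ZC t) h9
    simp only [map_add] at h
    rw [← STW.p0_comm cXAZC va, ← STW.p0_comm cXAZC vc, STW.p0_of_neg hZCva,
      STW.p0_of_fixed hZCvc, map_zero, zero_add, STW.p0_of_fixed hG1, STW.p0_of_neg hG3,
      add_zero] at h
    exact h
  ------------------------------------------------------------------
  -- identification of χ
  ------------------------------------------------------------------
  have hABfix : projP0 ZA (projP0 ZB (XC va)) = XC va := by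
    rw [← STW.p0_comm (fun x => (cZBXC x).symm) va, STW.p0_of_fixed hZBva,
      ← STW.p0_comm (fun x => (cZAXC x).symm) va, STW.p0_of_fixed hZAva]
  have hχ : projP0 ZA (projP0 ZB (projP0 ZC (XC ψ))) = XC va := by
    conv_lhs => rw [← hψ3]
    simp only [map_add]
    rw [STW.p0_of_fixed hG1, STW.p0_of_neg hG2, STW.p0_of_neg hG3]
    simp only [map_zero, add_zero]
    exact hABfix
  have hPC1ψ : projP1 ZC ψ = va := by
    conv_lhs => rw [← hψ3]
    rw [map_add, map_add, STW.p1_of_neg hZCva, STW.p1_of_fixed hZCvb, STW.p1_of_fixed hZCvc,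
      add_zero, add_zero]
  have hPC0ψ : projP0 ZC ψ = vb + vc := by
    conv_lhs => rw [← hψ3]
    rw [map_add, map_add, STW.p0_of_neg hZCva, STW.p0_of_fixed hZCvb, STW.p0_of_fixed hZCvc,
      zero_add]
  ------------------------------------------------------------------
  -- conclusion
  ------------------------------------------------------------------
  refine ⟨⟨?_, ?_, ?_⟩, ?_, ?_⟩
  · rw [hPC1ψ, hABfix, hχ]
  · have hPB1bc : projP1 ZB (vb + vc) = vb := by
      rw [map_add, STW.p1_of_neg hZBvb, STW.p1_of_fixed hZBvc, add_zero]
    have hPA0XBvb : projP0 ZA (XB vb) = XB vb := by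
      rw [← mXB_A vb, STW.p0_of_fixed hZAvb]
    rw [hPC0ψ, hPB1bc, hPA0XBvb, hkeyB, hχ]
  · have hPB0bc : projP0 ZB (vb + vc) = vc := by
      rw [map_add, STW.p0_of_neg hZBvb, STW.p0_of_fixed hZBvc, zero_add]
    rw [hkeyA, hχ]
  · rw [hχ]
    have h1 : ⟪XC va, XC va⟫ = ((1/3 : ℝ) : ℂ) := by
      rw [STW.bin_inner hXC, hva13]
      norm_num
    have h2 : ((‖XC va‖ ^ 2 : ℝ) : ℂ) = ((1/3 : ℝ) : ℂ) := by
      rw [← h1, inner_self_eq_norm_sq_to_K]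
      norm_cast
    exact_mod_cast h2
  · intro i j k hmem
    cases i <;> cases j <;> cases k
    · exact hz000
    · exact absurd (by simp) hmem
    · exact absurd (by simp) hmem
    · exact hz011
    · exact absurd (by simp) hmem
    · exact hz101
    · exact hz110
    · exact hz111
end

section
/- Let H be a complex Hilbert space, ψ ∈ H a unit vector, and let Z_A, X_B, X_C be binary observables on H that pairwise commute. Write P_A^0 = P⁰(Z_A). If ⟨ψ, P_A^0 ψ⟩ = 2/3 and ⟨ψ, P_A^0 X_B X_C ψ⟩ = 2/3, then P_A^0 X_B ψ = P_A^0 X_C ψ. -/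
open scoped ComplexInnerProductSpace

theorem stmt1 {H : Type*} [NormedAddCommGroup H] [InnerProductSpace ℂ H] [CompleteSpace H]
    (ψ : H) (hψ : ‖ψ‖ = 1)
    (ZA XB XC : H →L[ℂ] H)
    (hZA : IsBinaryObservable ZA) (hXB : IsBinaryObservable XB)
    (hXC : IsBinaryObservable XC)
    (hAB : Commute ZA XB) (hAC : Commute ZA XC) (hBC : Commute XB XC)
    (h1 : ⟪ψ, projP0 ZA ψ⟫ = 2/3)
    (h2 : ⟪ψ, projP0 ZA (XB (XC ψ))⟫ = 2/3) :
    projP0 ZA (XB ψ) = projP0 ZA (XC ψ) := by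
  set P : H →L[ℂ] H := projP0 ZA with hPdef
  -- P is self-adjoint
  have hP : IsSelfAdjoint P := by
    rw [hPdef]
    unfold projP0
    have hz := hZA.selfAdjoint
    rw [IsSelfAdjoint] at hz ⊢
    rw [star_smul, star_add, star_one, hz]
    norm_num
  -- P is idempotent
  have hPP : ∀ x : H, P (P x) = P x := by
    intro x
    have : (P ∘L P) = P := by
      rw [hPdef]
      unfold projP0
      ext y
      have hZ2 : ZA (ZA y) = y := congrFun (congrArg DFunLike.coe hZA.mul_self_eq_one) y
      simp only [ContinuousLinearMap.comp_apply, ContinuousLinearMap.smul_apply,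
        ContinuousLinearMap.add_apply, ContinuousLinearMap.one_apply, map_smul, map_add, hZ2]
      module
    calc P (P x) = (P ∘L P) x := rfl
    _ = P x := by rw [this]
  -- P commutes with XB and XC
  have hcomm : ∀ X : H →L[ℂ] H, Commute ZA X → ∀ x : H, X (P x) = P (X x) := by
    intro X hX x
    rw [hPdef]
    unfold projP0
    have h := congrFun (congrArg DFunLike.coe hX.eq) x
    simp only [ContinuousLinearMap.mul_apply] at h
    simp only [ContinuousLinearMap.smul_apply, ContinuousLinearMap.add_apply,
      ContinuousLinearMap.one_apply, map_smul, map_add, h]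
  have hPB := hcomm XB hAB
  have hPC := hcomm XC hAC
  -- symmetry
  have hPsym : ∀ x y : H, ⟪P x, y⟫ = ⟪x, P y⟫ :=
    (ContinuousLinearMap.isSelfAdjoint_iff_isSymmetric.mp hP)
  have hBsym : ∀ x y : H, ⟪XB x, y⟫ = ⟪x, XB y⟫ :=
    (ContinuousLinearMap.isSelfAdjoint_iff_isSymmetric.mp hXB.selfAdjoint)
  have hBB : ∀ x : H, XB (XB x) = x := fun x =>
    congrFun (congrArg DFunLike.coe hXB.mul_self_eq_one) x
  have hCsym : ∀ x y : H, ⟪XC x, y⟫ = ⟪x, XC y⟫ :=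
    (ContinuousLinearMap.isSelfAdjoint_iff_isSymmetric.mp hXC.selfAdjoint)
  have hCC : ∀ x : H, XC (XC x) = x := fun x =>
    congrFun (congrArg DFunLike.coe hXC.mul_self_eq_one) x
  set u : H := P (XB ψ)
  set v : H := P (XC ψ)
  have huu : ⟪u, u⟫ = 2/3 := by
    calc ⟪u, u⟫ = ⟪XB ψ, P (P (XB ψ))⟫ := hPsym _ _
    _ = ⟪XB ψ, P (XB ψ)⟫ := by rw [hPP]
    _ = ⟪ψ, XB (P (XB ψ))⟫ := hBsym _ _
    _ = ⟪ψ, P ψ⟫ := by rw [hPB, hBB]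
    _ = 2/3 := h1
  have hvv : ⟪v, v⟫ = 2/3 := by
    calc ⟪v, v⟫ = ⟪XC ψ, P (P (XC ψ))⟫ := hPsym _ _
    _ = ⟪XC ψ, P (XC ψ)⟫ := by rw [hPP]
    _ = ⟪ψ, XC (P (XC ψ))⟫ := hCsym _ _
    _ = ⟪ψ, P ψ⟫ := by rw [hPC, hCC]
    _ = 2/3 := h1
  have huv : ⟪u, v⟫ = 2/3 := by
    calc ⟪u, v⟫ = ⟪XB ψ, P (P (XC ψ))⟫ := hPsym _ _
    _ = ⟪XB ψ, P (XC ψ)⟫ := by rw [hPP]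
    _ = ⟪ψ, XB (P (XC ψ))⟫ := hBsym _ _
    _ = ⟪ψ, P (XB (XC ψ))⟫ := by rw [hPB]
    _ = 2/3 := h2
  have hvu : ⟪v, u⟫ = 2/3 := by
    rw [← inner_conj_symm, huv]
    rw [map_div₀, map_ofNat, map_ofNat]
  have hzero : ⟪u - v, u - v⟫ = 0 := by
    rw [inner_sub_left, inner_sub_right, inner_sub_right, huu, hvv, huv, hvu]
    ring
  have := inner_self_eq_zero.mp hzero
  have huveq : u = v := sub_eq_zero.mp this
  exact huveq
end

section
/- Let H be a complex Hilbert space, ψ ∈ H a unit vector, and let Z_A, Z_B, Z_C be binary observables on H that pairwise commute. Write P_A^0 = P⁰(Z_A). If ⟨ψ, P_A^0 ψ⟩ = 2/3 and ⟨ψ, P_A^0 Z_B Z_C ψ⟩ = −2/3, then P_A^0 Z_B ψ = −P_A^0 Z_C ψ. -/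
/-! With `P = P⁰(Z_A)`, a self-adjoint idempotent commuting with the self-adjoint `Z_B` and `Z_C`,
one has `⟪P (Z ψ), P (Z' ψ)⟫ = ⟪ψ, P (Z (Z' ψ))⟫` for `Z, Z' ∈ {Z_B, Z_C}`. Hence
`‖P Z_B ψ + P Z_C ψ‖² = 2 ⟪ψ, P ψ⟫ + 2 Re ⟪ψ, P Z_B Z_C ψ⟫ = 4/3 - 4/3 = 0`. -/

open scoped ComplexInnerProductSpace

namespace IsBinaryObservable

variable {H : Type*} [NormedAddCommGroup H] [InnerProductSpace ℂ H] [CompleteSpace H]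
  {Z : H →L[ℂ] H}

lemma apply_apply (hZ : IsBinaryObservable Z) (x : H) : Z (Z x) = x :=
  DFunLike.congr_fun hZ.mul_self_eq_one x

lemma isStarProjection_projP0 (hZ : IsBinaryObservable Z) : IsStarProjection (projP0 Z) where
  isIdempotentElem := by
    have hZZ : Z * Z = 1 := hZ.mul_self_eq_one
    simp only [IsIdempotentElem, projP0, smul_mul_smul_comm, add_mul, mul_add, one_mul, mul_one,
      hZZ]
    module
  isSelfAdjoint :=
    (IsSelfAdjoint.ofNat 2 : IsSelfAdjoint (2 : ℂ)).inv₀.smul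
      ((IsSelfAdjoint.one _).add hZ.selfAdjoint)

end IsBinaryObservable

lemma commute_projP0 {H : Type*} [NormedAddCommGroup H] [InnerProductSpace ℂ H]
    {Z W : H →L[ℂ] H} (h : Commute Z W) : Commute (projP0 Z) W :=
  ((Commute.one_left W).add_left h).smul_left _

lemma IsStarProjection.inner_apply_apply_of_commute {𝕜 E : Type*} [RCLike 𝕜]
    [NormedAddCommGroup E] [InnerProductSpace 𝕜 E] [CompleteSpace E] {P W : E →L[𝕜] E}
    (hP : IsStarProjection P) (hW : IsSelfAdjoint W) (hPW : Commute P W) (x y : E) :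
    inner 𝕜 (P (W x)) (P y) = inner 𝕜 x (P (W y)) := by
  have hPP : P (P y) = P y := DFunLike.congr_fun hP.isIdempotentElem y
  calc inner 𝕜 (P (W x)) (P y) = inner 𝕜 (W x) (P (P y)) := hP.isSelfAdjoint.isSymmetric _ _
    _ = inner 𝕜 x (W (P y)) := by rw [hPP]; exact hW.isSymmetric x (P y)
    _ = inner 𝕜 x (P (W y)) := congrArg (inner 𝕜 x) (DFunLike.congr_fun hPW.eq y).symm

theorem stmt2_general {H : Type*} [NormedAddCommGroup H] [InnerProductSpace ℂ H] [CompleteSpace H]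
    (ψ : H)
    (ZA ZB ZC : H →L[ℂ] H)
    (hZA : IsBinaryObservable ZA) (hZB : IsBinaryObservable ZB)
    (hZC : IsBinaryObservable ZC)
    (hAB : Commute ZA ZB) (hAC : Commute ZA ZC)
    (h1 : ⟪ψ, projP0 ZA ψ⟫ = 2/3)
    (h2 : ⟪ψ, projP0 ZA (ZB (ZC ψ))⟫ = -(2/3)) :
    projP0 ZA (ZB ψ) = -projP0 ZA (ZC ψ) := by
  have hP := hZA.isStarProjection_projP0
  set P := projP0 ZA
  have hBB : ⟪P (ZB ψ), P (ZB ψ)⟫ = 2/3 := by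
    rw [hP.inner_apply_apply_of_commute hZB.selfAdjoint (commute_projP0 hAB), hZB.apply_apply, h1]
  have hCC : ⟪P (ZC ψ), P (ZC ψ)⟫ = 2/3 := by
    rw [hP.inner_apply_apply_of_commute hZC.selfAdjoint (commute_projP0 hAC), hZC.apply_apply, h1]
  have hBC : ⟪P (ZB ψ), P (ZC ψ)⟫ = -(2/3) := by
    rw [hP.inner_apply_apply_of_commute hZB.selfAdjoint (commute_projP0 hAB), h2]
  have hCB : ⟪P (ZC ψ), P (ZB ψ)⟫ = -(2/3) := by
    rw [← inner_conj_symm, hBC, map_neg, map_div₀, map_ofNat, map_ofNat]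
  have hsum : ⟪P (ZB ψ) + P (ZC ψ), P (ZB ψ) + P (ZC ψ)⟫ = 0 := by
    rw [inner_add_left, inner_add_right, inner_add_right, hBB, hCC, hBC, hCB]
    ring
  exact eq_neg_of_add_eq_zero_left (inner_self_eq_zero.mp hsum)

theorem stmt2 {H : Type*} [NormedAddCommGroup H] [InnerProductSpace ℂ H] [CompleteSpace H]
    (ψ : H) (hψ : ‖ψ‖ = 1)
    (ZA ZB ZC : H →L[ℂ] H)
    (hZA : IsBinaryObservable ZA) (hZB : IsBinaryObservable ZB)
    (hZC : IsBinaryObservable ZC)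
    (hAB : Commute ZA ZB) (hAC : Commute ZA ZC) (hBC : Commute ZB ZC)
    (h1 : ⟪ψ, projP0 ZA ψ⟫ = 2/3)
    (h2 : ⟪ψ, projP0 ZA (ZB (ZC ψ))⟫ = -(2/3)) :
    projP0 ZA (ZB ψ) = -projP0 ZA (ZC ψ) :=
  stmt2_general ψ ZA ZB ZC hZA hZB hZC hAB hAC h1 h2
end

section
/- Let H be a complex Hilbert space, ψ ∈ H a unit vector, and let Z_A, X_B, Z_B, Z_C be binary observables on H such that Z_A commutes with X_B, Z_B, Z_C, and each of X_B, Z_B commutes with Z_C. Write P_A^0 = P⁰(Z_A). If ⟨ψ, P_A^0 ψ⟩ = 2/3, ⟨ψ, P_A^0 Z_B Z_C ψ⟩ = −2/3, and ⟨ψ, P_A^0 X_B Z_C ψ⟩ = 0, then the vectors P_A^0 X_B ψ and P_A^0 Z_B ψ are orthogonal: ⟨P_A^0 X_B ψ, P_A^0 Z_B ψ⟩ = 0. -/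
open scoped ComplexInnerProductSpace

section helper
variable {H : Type*} [NormedAddCommGroup H] [InnerProductSpace ℂ H] [CompleteSpace H]

theorem mySA_inner (A : H →L[ℂ] H) (hA : IsSelfAdjoint A) (x y : H) :
    ⟪A x, y⟫ = ⟪x, A y⟫ := by
  conv_lhs => rw [← hA.adjoint_eq]
  exact ContinuousLinearMap.adjoint_inner_left A y x
end helper

set_option maxHeartbeats 1000000 in
theorem stmt3 {H : Type*} [NormedAddCommGroup H] [InnerProductSpace ℂ H] [CompleteSpace H]
    (ψ : H) (hψ : ‖ψ‖ = 1)
    (ZA XB ZB ZC : H →L[ℂ] H)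
    (hZA : IsBinaryObservable ZA) (hXB : IsBinaryObservable XB)
    (hZB : IsBinaryObservable ZB) (hZC : IsBinaryObservable ZC)
    (hA1 : Commute ZA XB) (hA2 : Commute ZA ZB) (hA3 : Commute ZA ZC)
    (hB1 : Commute XB ZC) (hB2 : Commute ZB ZC)
    (h1 : ⟪ψ, projP0 ZA ψ⟫ = 2/3)
    (h2 : ⟪ψ, projP0 ZA (ZB (ZC ψ))⟫ = -(2/3))
    (h3 : ⟪ψ, projP0 ZA (XB (ZC ψ))⟫ = 0) :
    ⟪projP0 ZA (XB ψ), projP0 ZA (ZB ψ)⟫ = 0 := by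
  have hZAsq : ZA * ZA = 1 := hZA.mul_self_eq_one
  have hZBsq : ZB * ZB = 1 := hZB.mul_self_eq_one
  have hZCsq : ZC * ZC = 1 := hZC.mul_self_eq_one
  set P : H →L[ℂ] H := projP0 ZA with hPdef
  -- P is self-adjoint
  have hPsa : IsSelfAdjoint P := by
    rw [hPdef, IsSelfAdjoint, projP0, star_smul, star_add, star_one, hZA.selfAdjoint.star_eq]
    norm_num
  -- P is idempotent
  have hPP : P * P = P := by
    rw [hPdef, projP0, smul_mul_smul_comm]
    have : ((1 : H →L[ℂ] H) + ZA) * (1 + ZA) = (2:ℂ) • (1 + ZA) := by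
      rw [add_mul, one_mul, mul_add, mul_one, hZAsq, two_smul]
      abel
    rw [this, smul_smul]
    norm_num
  -- P commutes with operators that commute with ZA
  have hcomm : ∀ B : H →L[ℂ] H, Commute ZA B → P * B = B * P := by
    intro B hB
    rw [hPdef, projP0, smul_mul_assoc, mul_smul_comm]
    congr 1
    rw [add_mul, mul_add, one_mul, mul_one, hB.eq]
  have hPX : P * XB = XB * P := hcomm XB hA1
  have hPZB : P * ZB = ZB * P := hcomm ZB hA2
  have hPZC : P * ZC = ZC * P := hcomm ZC hA3
  set S : H →L[ℂ] H := ZB * ZC with hSdef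
  have hSsq : S * S = 1 := by
    rw [hSdef]
    calc ZB * ZC * (ZB * ZC) = ZB * (ZC * ZB) * ZC := by noncomm_ring
    _ = ZB * (ZB * ZC) * ZC := by rw [← hB2.eq]
    _ = (ZB * ZB) * (ZC * ZC) := by noncomm_ring
    _ = 1 := by rw [hZBsq, hZCsq, one_mul]
  have hPS : P * S = S * P := by
    rw [hSdef, ← mul_assoc, hPZB, mul_assoc, hPZC, mul_assoc]
  have hSsa : IsSelfAdjoint S := by
    rw [hSdef]
    exact (hZB.selfAdjoint.commute_iff hZC.selfAdjoint).mp hB2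
  set T : H →L[ℂ] H := P * (1 + S) with hTdef
  have hTinner : ⟪ψ, T ψ⟫ = 0 := by
    have : T ψ = P ψ + P (ZB (ZC ψ)) := by
      simp [hTdef, hSdef, ContinuousLinearMap.mul_apply, map_add]
    rw [this, inner_add_right, h1, h2]
    ring
  have hTsa' : star T = (1 + S) * P := by
    have hone : IsSelfAdjoint (1 : H →L[ℂ] H) := IsSelfAdjoint.one _
    rw [hTdef, star_mul, hPsa.star_eq, (hone.add hSsa).star_eq]
  have hTT : star T * T = (2:ℂ) • T := by
    rw [hTsa', hTdef]
    have hc1 : (1 + S) * P = P * (1 + S) := by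
      rw [add_mul, one_mul, mul_add, mul_one, hPS]
    have hc2 : ((1 : H →L[ℂ] H) + S) * (1 + S) = (2:ℂ) • (1 + S) := by
      rw [add_mul, one_mul, mul_add, mul_one, hSsq, two_smul]
      abel
    calc (1 + S) * P * (P * (1 + S)) = (1 + S) * (P * P) * (1 + S) := by noncomm_ring
    _ = (1 + S) * P * (1 + S) := by rw [hPP]
    _ = P * (1 + S) * (1 + S) := by rw [hc1]
    _ = P * ((1 + S) * (1 + S)) := by rw [mul_assoc]
    _ = (2:ℂ) • (P * (1 + S)) := by rw [hc2, mul_smul_comm]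
  have hTzero : T ψ = 0 := by
    have h0 : ⟪T ψ, T ψ⟫ = 0 := by
      calc ⟪T ψ, T ψ⟫ = ⟪ψ, ContinuousLinearMap.adjoint T (T ψ)⟫ :=
            (ContinuousLinearMap.adjoint_inner_right T ψ (T ψ)).symm
      _ = ⟪ψ, (star T * T) ψ⟫ := by rw [ContinuousLinearMap.star_eq_adjoint]; rfl
      _ = (2:ℂ) * ⟪ψ, T ψ⟫ := by
          rw [hTT, ContinuousLinearMap.smul_apply, inner_smul_right]
      _ = 0 := by rw [hTinner, mul_zero]
    exact inner_self_eq_zero.mp h0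
  -- key: ZB (P ψ) = - ZC (P ψ)
  have hkey : ZB (ZC (P ψ)) = -(P ψ) := by
    have h4 : P ψ + P (ZB (ZC ψ)) = 0 := by
      have : T ψ = P ψ + P (ZB (ZC ψ)) := by
        simp [hTdef, hSdef, ContinuousLinearMap.mul_apply, map_add]
      rw [← this, hTzero]
    have h5 : P (ZB (ZC ψ)) = ZB (ZC (P ψ)) := by
      have := DFunLike.congr_fun (hSdef ▸ hPS : P * (ZB * ZC) = (ZB * ZC) * P) ψ
      simpa [ContinuousLinearMap.mul_apply] using this
    rw [← h5]
    linear_combination (norm := abel) h4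
  have hkey2 : ZB (P ψ) = -(ZC (P ψ)) := by
    have := congrArg ZB hkey
    have h6 : ZB (ZB (ZC (P ψ))) = ZC (P ψ) := by
      have := DFunLike.congr_fun hZBsq (ZC (P ψ))
      simpa [ContinuousLinearMap.mul_apply] using this
    rw [h6, map_neg] at this
    rw [eq_comm, neg_eq_iff_eq_neg] at this
    rw [this]
  -- final computation
  have step1 : ⟪P (XB ψ), P (ZB ψ)⟫ = ⟪XB ψ, P (P (ZB ψ))⟫ :=
    mySA_inner P hPsa _ _
  have hPPapp : P (P (ZB ψ)) = P (ZB ψ) := by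
    have := DFunLike.congr_fun hPP (ZB ψ)
    simpa [ContinuousLinearMap.mul_apply] using this
  have hPZBapp : P (ZB ψ) = ZB (P ψ) := by
    have := DFunLike.congr_fun hPZB ψ
    simpa [ContinuousLinearMap.mul_apply] using this
  rw [step1, hPPapp, hPZBapp, mySA_inner XB hXB.selfAdjoint, hkey2, map_neg, inner_neg_right]
  have hfinal : XB (ZC (P ψ)) = P (XB (ZC ψ)) := by
    have hc : XB * ZC * P = P * (XB * ZC) := by
      rw [mul_assoc, ← hPZC, ← mul_assoc, ← hPX, mul_assoc]
    have := DFunLike.congr_fun hc ψ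
    simpa [ContinuousLinearMap.mul_apply] using this
  rw [hfinal, h3, neg_zero]
end

section
/- Let H be a complex Hilbert space, ψ ∈ H a unit vector, and let Z_A, X_B, Z_B, Z_C, D_C be binary observables on H such that Z_A commutes with X_B, Z_B, Z_C, D_C, and each of X_B, Z_B commutes with Z_C and with D_C. Write P_A^0 = P⁰(Z_A). If ⟨ψ, P_A^0 ψ⟩ = 2/3, ⟨ψ, P_A^0 Z_B Z_C ψ⟩ = −2/3, ⟨ψ, P_A^0 X_B Z_C ψ⟩ = 0, ⟨ψ, P_A^0 X_B D_C ψ⟩ = (1/√2)(2/3), and ⟨ψ, P_A^0 Z_B D_C ψ⟩ = −(1/√2)(2/3), then P_A^0 D_C ψ = (1/√2)·P_A^0 (X_B − Z_B) ψ. -/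
open scoped ComplexInnerProductSpace

theorem stmt4 {H : Type*} [NormedAddCommGroup H] [InnerProductSpace ℂ H] [CompleteSpace H]
    (ψ : H) (hψ : ‖ψ‖ = 1)
    (ZA XB ZB ZC DC : H →L[ℂ] H)
    (hZA : IsBinaryObservable ZA) (hXB : IsBinaryObservable XB)
    (hZB : IsBinaryObservable ZB) (hZC : IsBinaryObservable ZC)
    (hDC : IsBinaryObservable DC)
    (hA1 : Commute ZA XB) (hA2 : Commute ZA ZB) (hA3 : Commute ZA ZC)
    (hA4 : Commute ZA DC)
    (hB1 : Commute XB ZC) (hB2 : Commute XB DC)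
    (hB3 : Commute ZB ZC) (hB4 : Commute ZB DC)
    (h1 : ⟪ψ, projP0 ZA ψ⟫ = 2/3)
    (h2 : ⟪ψ, projP0 ZA (ZB (ZC ψ))⟫ = -(2/3))
    (h3 : ⟪ψ, projP0 ZA (XB (ZC ψ))⟫ = 0)
    (h4 : ⟪ψ, projP0 ZA (XB (DC ψ))⟫ = (Real.sqrt 2 : ℂ)⁻¹ * (2/3))
    (h5 : ⟪ψ, projP0 ZA (ZB (DC ψ))⟫ = -((Real.sqrt 2 : ℂ)⁻¹ * (2/3))) :
    projP0 ZA (DC ψ) = (Real.sqrt 2)⁻¹ • projP0 ZA ((XB - ZB) ψ) := by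
  set P := projP0 ZA with hPdef
  have hPapp : ∀ x, P x = (2:ℂ)⁻¹ • (x + ZA x) := fun x => by
    simp [hPdef, projP0, ContinuousLinearMap.smul_apply, ContinuousLinearMap.add_apply]
  have sq : ∀ (A : H →L[ℂ] H), IsBinaryObservable A → ∀ x, A (A x) = x := by
    intro A hA x
    have := DFunLike.congr_fun hA.mul_self_eq_one x
    simpa using this
  have saA : ∀ (A : H →L[ℂ] H), IsBinaryObservable A → ∀ x y, ⟪A x, y⟫ = ⟪x, A y⟫ := by
    intro A hA x y
    simpa using hA.selfAdjoint.isSymmetric x y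
  have hPsa : IsSelfAdjoint P := by
    rw [hPdef, projP0]
    refine IsSelfAdjoint.smul ?_ ((IsSelfAdjoint.one (R := H →L[ℂ] H)).add hZA.selfAdjoint)
    rw [IsSelfAdjoint]
    simp [Complex.star_def, map_ofNat]
  have saP : ∀ x y, ⟪P x, y⟫ = ⟪x, P y⟫ := by
    intro x y
    simpa using hPsa.isSymmetric x y
  have hPP : ∀ x, P (P x) = P x := by
    intro x
    simp only [hPapp, map_add, map_smul, sq ZA hZA]
    module
  have hPc : ∀ (A : H →L[ℂ] H), Commute ZA A → ∀ x, P (A x) = A (P x) := by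
    intro A hc x
    have h := DFunLike.congr_fun hc x
    simp only [ContinuousLinearMap.mul_apply] at h
    simp only [hPapp, map_add, map_smul, h]
  -- basic values
  have k0 : ⟪P ψ, P ψ⟫ = (2/3 : ℂ) := by rw [saP, hPP, h1]
  have k2 : ⟪P ψ, ZB (ZC (P ψ))⟫ = -(2/3 : ℂ) := by
    rw [← hPc ZC hA3, ← hPc ZB hA2, saP, hPP, h2]
  -- step 1 : ZB ZC (P ψ) = - P ψ
  have key : ZB (ZC (P ψ)) = -(P ψ) := by
    have hz : ⟪ZB (ZC (P ψ)) + P ψ, ZB (ZC (P ψ)) + P ψ⟫ = 0 := by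
      rw [inner_add_add_self]
      have e1 : ⟪ZB (ZC (P ψ)), ZB (ZC (P ψ))⟫ = (2/3 : ℂ) := by
        rw [saA ZB hZB, sq ZB hZB, saA ZC hZC, sq ZC hZC, k0]
      have e2 : ⟪ZB (ZC (P ψ)), P ψ⟫ = -(2/3 : ℂ) := by
        rw [← inner_conj_symm, k2]
        simp [map_ofNat]
      rw [e1, e2, k2, k0]
      ring
    exact eq_neg_of_add_eq_zero_left (inner_self_eq_zero.mp hz)
  have hZBphi : ZB (P ψ) = -(ZC (P ψ)) := by
    have h' := congrArg ZC key
    rw [map_neg] at h'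
    have hc := DFunLike.congr_fun hB3 (ZC (P ψ))
    simp only [ContinuousLinearMap.mul_apply] at hc
    rw [← hc, sq ZC hZC] at h'
    exact h'
  -- main inner product values
  have m_vv : ⟪P (DC ψ), P (DC ψ)⟫ = (2/3 : ℂ) := by
    rw [saP, hPP, saA DC hDC, ← hPc DC hA4, sq DC hDC, h1]
  have hxd := DFunLike.congr_fun hB2 ψ
  simp only [ContinuousLinearMap.mul_apply] at hxd
  have hzd := DFunLike.congr_fun hB4 ψ
  simp only [ContinuousLinearMap.mul_apply] at hzd
  have m_vx : ⟪P (DC ψ), P (XB ψ)⟫ = (Real.sqrt 2 : ℂ)⁻¹ * (2/3) := by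
    rw [saP, hPP, saA DC hDC, ← hPc DC hA4, ← hxd, h4]
  have m_vz : ⟪P (DC ψ), P (ZB ψ)⟫ = -((Real.sqrt 2 : ℂ)⁻¹ * (2/3)) := by
    rw [saP, hPP, saA DC hDC, ← hPc DC hA4, ← hzd, h5]
  have m_xv : ⟪P (XB ψ), P (DC ψ)⟫ = (Real.sqrt 2 : ℂ)⁻¹ * (2/3) := by
    rw [← inner_conj_symm, m_vx]
    simp [map_ofNat]
  have m_zv : ⟪P (ZB ψ), P (DC ψ)⟫ = -((Real.sqrt 2 : ℂ)⁻¹ * (2/3)) := by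
    rw [← inner_conj_symm, m_vz]
    simp [map_ofNat]
  have m_xx : ⟪P (XB ψ), P (XB ψ)⟫ = (2/3 : ℂ) := by
    rw [saP, hPP, saA XB hXB, ← hPc XB hA1, sq XB hXB, h1]
  have m_zz : ⟪P (ZB ψ), P (ZB ψ)⟫ = (2/3 : ℂ) := by
    rw [saP, hPP, saA ZB hZB, ← hPc ZB hA2, sq ZB hZB, h1]
  have m_xz : ⟪P (XB ψ), P (ZB ψ)⟫ = 0 := by
    rw [saP, hPP, saA XB hXB, hPc ZB hA2, hZBphi, map_neg, inner_neg_right,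
      ← hPc ZC hA3, ← hPc XB hA1, h3]
    simp
  have m_zx : ⟪P (ZB ψ), P (XB ψ)⟫ = 0 := by
    rw [← inner_conj_symm, m_xz]
    simp
  -- conclude
  have hc2 : (Real.sqrt 2 : ℂ)⁻¹ * (Real.sqrt 2 : ℂ)⁻¹ = 2⁻¹ := by
    rw [← mul_inv]
    norm_cast
    rw [Real.mul_self_sqrt (by norm_num)]
    norm_num
  rw [RCLike.real_smul_eq_coe_smul (K := ℂ), ← sub_eq_zero, ← inner_self_eq_zero (𝕜 := ℂ)]
  have hsub : P ((XB - ZB) ψ) = P (XB ψ) - P (ZB ψ) := by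
    rw [ContinuousLinearMap.sub_apply, map_sub]
  rw [hsub]
  simp only [inner_sub_left, inner_sub_right, inner_smul_left, inner_smul_right,
    Complex.ofReal_inv, m_vv, m_vx, m_vz, m_xv, m_zv, m_xx, m_zz, m_xz, m_zx,
    Complex.conj_ofReal, map_inv₀, Complex.coe_algebraMap]
  ring_nf
  linear_combination (-(4:ℂ)/3) * hc2
end

section
/- Let H be a complex Hilbert space, ψ ∈ H, and let Z_A, X_B, Z_B, D_C be binary observables on H such that Z_A commutes with X_B, Z_B, D_C, and D_C commutes with X_B and Z_B. Write P_A^0 = P⁰(Z_A). If P_A^0 D_C ψ = (1/√2)·P_A^0 (X_B − Z_B) ψ, then P_A^0 (X_B Z_B + Z_B X_B) ψ = 0, i.e. X_B and Z_B anticommute on the range of P_A^0 applied to ψ. -/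
open scoped ComplexInnerProductSpace

theorem stmt5 {H : Type*} [NormedAddCommGroup H] [InnerProductSpace ℂ H] [CompleteSpace H]
    (ψ : H)
    (ZA XB ZB DC : H →L[ℂ] H)
    (hZA : IsBinaryObservable ZA) (hXB : IsBinaryObservable XB)
    (hZB : IsBinaryObservable ZB) (hDC : IsBinaryObservable DC)
    (hA1 : Commute ZA XB) (hA2 : Commute ZA ZB) (hA3 : Commute ZA DC)
    (hD1 : Commute DC XB) (hD2 : Commute DC ZB)
    (h : projP0 ZA (DC ψ) = (Real.sqrt 2)⁻¹ • projP0 ZA ((XB - ZB) ψ)) :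
    projP0 ZA ((XB * ZB + ZB * XB) ψ) = 0 := by
  set P := projP0 ZA with hP
  -- apply-level commutation helper
  have capp : ∀ (A B : H →L[ℂ] H), Commute A B → ∀ x, A (B x) = B (A x) := by
    intro A B hc x
    have := congrArg (fun T : H →L[ℂ] H => T x) hc.eq
    simpa using this
  have hPcomm : ∀ T : H →L[ℂ] H, Commute ZA T → Commute P T := by
    intro T hT
    rw [hP]
    unfold projP0
    exact ((Commute.one_left T).add_left hT).smul_left _
  have hPX : Commute P XB := hPcomm _ hA1
  have hPZ : Commute P ZB := hPcomm _ hA2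
  have hPD : Commute P DC := hPcomm _ hA3
  have hPXZ : Commute P (XB - ZB) := hPX.sub_right hPZ
  have hDXZ : Commute DC (XB - ZB) := hD1.sub_right hD2
  have hDD : ∀ x, DC (DC x) = x := by
    intro x
    have := congrArg (fun T : H →L[ℂ] H => T x) hDC.mul_self_eq_one
    simpa using this
  set c : ℂ := ((Real.sqrt 2 : ℝ) : ℂ)⁻¹ with hc
  have h' : P (DC ψ) = c • P ((XB - ZB) ψ) := by
    rw [h, hc, ← Complex.coe_smul]
    push_cast
    ring_nf
  have key : P ψ = (c * c) • P (((XB - ZB) * (XB - ZB)) ψ) := by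
    calc P ψ = P (DC (DC ψ)) := by rw [hDD]
      _ = DC (P (DC ψ)) := by rw [capp _ _ hPD]
      _ = DC (c • P ((XB - ZB) ψ)) := by rw [h']
      _ = c • DC (P ((XB - ZB) ψ)) := by rw [map_smul]
      _ = c • P (DC ((XB - ZB) ψ)) := by rw [capp _ _ hPD]
      _ = c • P ((XB - ZB) (DC ψ)) := by rw [capp _ _ hDXZ]
      _ = c • (XB - ZB) (P (DC ψ)) := by rw [capp _ _ hPXZ]
      _ = c • (XB - ZB) (c • P ((XB - ZB) ψ)) := by rw [h']
      _ = (c * c) • (XB - ZB) (P ((XB - ZB) ψ)) := by rw [map_smul, smul_smul]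
      _ = (c * c) • P ((XB - ZB) ((XB - ZB) ψ)) := by rw [capp _ _ hPXZ.symm]
      _ = (c * c) • P (((XB - ZB) * (XB - ZB)) ψ) := by
            rw [ContinuousLinearMap.mul_apply]
  have hcc : c * c = (2 : ℂ)⁻¹ := by
    rw [hc, ← mul_inv]
    have h2 : ((Real.sqrt 2 : ℝ) : ℂ) * ((Real.sqrt 2 : ℝ) : ℂ) = 2 := by
      norm_cast
      exact Real.mul_self_sqrt (by norm_num)
    rw [h2]
  have hX2 : XB * XB = 1 := hXB.mul_self_eq_one
  have hZ2 : ZB * ZB = 1 := hZB.mul_self_eq_one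
  have hsq : (XB - ZB) * (XB - ZB) = (1 + 1 : H →L[ℂ] H) - (XB * ZB + ZB * XB) := by
    rw [sub_mul, mul_sub, mul_sub, hX2, hZ2]
    abel
  have happ : ((1 + 1 : H →L[ℂ] H) - (XB * ZB + ZB * XB)) ψ
      = ψ + ψ - (XB * ZB + ZB * XB) ψ := by
    simp [ContinuousLinearMap.sub_apply, ContinuousLinearMap.add_apply]
  rw [hsq, hcc, happ, map_sub, map_add] at key
  have h2 : P ψ + P ψ = P ψ + P ψ - P ((XB * ZB + ZB * XB) ψ) := by
    have := congrArg (fun v => (2 : ℂ) • v) key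
    simpa [smul_smul, two_smul] using this
  exact sub_eq_self.mp h2.symm
end

section
/- Let H be a complex Hilbert space, ψ ∈ H, and let Z_A, X_A, Z_B, X_B, Z_C, X_C be binary observables on H such that every operator in {Z_A, X_A} commutes with every operator in {Z_B, X_B, Z_C, X_C}, and every operator in {Z_B, X_B} commutes with every operator in {Z_C, X_C}. Write P_Q^0 = P⁰(Z_Q) and P_Q^1 = P¹(Z_Q). Assume: P_A^0 (X_B Z_B + Z_B X_B) ψ = 0, P_A^0 (X_C Z_C + Z_C X_C) ψ = 0, P_B^0 (X_A Z_A + Z_A X_A) ψ = 0, P_A^0 X_B ψ = P_A^0 X_C ψ, and P_B^0 X_A ψ = P_B^0 X_C ψ. Then P_A^0 P_B^0 X_C P_C^1 ψ = P_A^0 X_B P_B^1 P_C^0 ψ = X_A P_A^1 P_B^0 P_C^0 ψ = P_A^0 P_B^0 P_C^0 X_C ψ. -/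
open scoped ComplexInnerProductSpace

lemma swap_apply {H : Type*} [NormedAddCommGroup H] [InnerProductSpace ℂ H]
    {P Q : H →L[ℂ] H} (h : Commute P Q) (v : H) : P (Q v) = Q (P v) := by
  have := congrArg (fun T : H →L[ℂ] H => T v) h.eq
  simpa [ContinuousLinearMap.mul_apply] using this

lemma commute_proj {H : Type*} [NormedAddCommGroup H] [InnerProductSpace ℂ H]
    {A B : H →L[ℂ] H} (h : Commute A B) : Commute (projP0 A) B := by
  unfold projP0
  exact ((Commute.one_left B).add_left h).smul_left _

lemma keyeq {H : Type*} [NormedAddCommGroup H] [InnerProductSpace ℂ H]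
    (Z X : H →L[ℂ] H) (v : H) :
    X (projP1 Z v) = projP0 Z (X v) - (2:ℂ)⁻¹ • ((X*Z + Z*X) v) := by
  simp [projP0, projP1, ContinuousLinearMap.mul_apply, map_smul, map_sub, map_add,
    smul_sub, smul_add, ContinuousLinearMap.add_apply, ContinuousLinearMap.smul_apply,
    ContinuousLinearMap.one_apply, ContinuousLinearMap.sub_apply]

theorem stmt6 {H : Type*} [NormedAddCommGroup H] [InnerProductSpace ℂ H] [CompleteSpace H]
    (ψ : H)
    (ZA XA ZB XB ZC XC : H →L[ℂ] H)
    (hZA : IsBinaryObservable ZA) (hXA : IsBinaryObservable XA)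
    (hZB : IsBinaryObservable ZB) (hXB : IsBinaryObservable XB)
    (hZC : IsBinaryObservable ZC) (hXC : IsBinaryObservable XC)
    (hAcomm : ∀ P ∈ [ZA, XA], ∀ Q ∈ [ZB, XB, ZC, XC], Commute P Q)
    (hBcomm : ∀ P ∈ [ZB, XB], ∀ Q ∈ [ZC, XC], Commute P Q)
    (h1 : projP0 ZA ((XB * ZB + ZB * XB) ψ) = 0)
    (h2 : projP0 ZA ((XC * ZC + ZC * XC) ψ) = 0)
    (h3 : projP0 ZB ((XA * ZA + ZA * XA) ψ) = 0)
    (h4 : projP0 ZA (XB ψ) = projP0 ZA (XC ψ))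
    (h5 : projP0 ZB (XA ψ) = projP0 ZB (XC ψ)) :
    projP0 ZA (projP0 ZB (XC (projP1 ZC ψ))) = projP0 ZA (projP0 ZB (projP0 ZC (XC ψ))) ∧
    projP0 ZA (XB (projP1 ZB (projP0 ZC ψ))) = projP0 ZA (projP0 ZB (projP0 ZC (XC ψ))) ∧
    XA (projP1 ZA (projP0 ZB (projP0 ZC ψ))) = projP0 ZA (projP0 ZB (projP0 ZC (XC ψ))) := by
  -- basic commutation facts
  have cZAZB : Commute ZA ZB := hAcomm ZA (by simp) ZB (by simp)
  have cZAXB : Commute ZA XB := hAcomm ZA (by simp) XB (by simp)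
  have cZAZC : Commute ZA ZC := hAcomm ZA (by simp) ZC (by simp)
  have cZAXC : Commute ZA XC := hAcomm ZA (by simp) XC (by simp)
  have cXAZB : Commute XA ZB := hAcomm XA (by simp) ZB (by simp)
  have cXAZC : Commute XA ZC := hAcomm XA (by simp) ZC (by simp)
  have cZBZC : Commute ZB ZC := hBcomm ZB (by simp) ZC (by simp)
  have cZBXC : Commute ZB XC := hBcomm ZB (by simp) XC (by simp)
  have cXBZC : Commute XB ZC := hBcomm XB (by simp) ZC (by simp)
  -- projections commute
  have pAB : Commute (projP0 ZA) (projP0 ZB) := (commute_proj (commute_proj cZAZB).symm).symm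
  have pAC : Commute (projP0 ZA) (projP0 ZC) := (commute_proj (commute_proj cZAZC).symm).symm
  have pBC : Commute (projP0 ZB) (projP0 ZC) := (commute_proj (commute_proj cZBZC).symm).symm
  -- projP0 ZC commutes with operators on A and B
  have pCXB : Commute (projP0 ZC) XB := commute_proj cXBZC.symm
  have pCZB : Commute (projP0 ZC) ZB := commute_proj cZBZC.symm
  have pCXA : Commute (projP0 ZC) XA := commute_proj cXAZC.symm
  have pBXA : Commute (projP0 ZB) XA := commute_proj cXAZB.symm
  have pBantiA : Commute (projP0 ZB) (XA * ZA + ZA * XA) := by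
    have h1 : Commute ZB XA := cXAZB.symm
    have h2 : Commute ZB ZA := cZAZB.symm
    exact commute_proj ((h1.mul_right h2).add_right (h2.mul_right h1))
  have pCantiA : Commute (projP0 ZC) (XA * ZA + ZA * XA) := by
    have h1 : Commute ZC XA := cXAZC.symm
    have h2 : Commute ZC ZA := cZAZC.symm
    exact commute_proj ((h1.mul_right h2).add_right (h2.mul_right h1))
  have pCantiB : Commute (projP0 ZC) (XB * ZB + ZB * XB) := by
    have h1 : Commute ZC XB := cXBZC.symm
    have h2 : Commute ZC ZB := cZBZC.symm
    exact commute_proj ((h1.mul_right h2).add_right (h2.mul_right h1))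
  refine ⟨?_, ?_, ?_⟩
  · -- goal 1
    rw [keyeq ZC XC ψ]
    have hz : projP0 ZA (projP0 ZB ((XC * ZC + ZC * XC) ψ)) = 0 := by
      rw [swap_apply pAB, h2, map_zero]
    rw [map_sub, map_smul, map_sub, map_smul, hz, smul_zero, sub_zero]
  · -- goal 2
    rw [keyeq ZB XB (projP0 ZC ψ)]
    have hz : projP0 ZA ((XB * ZB + ZB * XB) (projP0 ZC ψ)) = 0 := by
      rw [← swap_apply pCantiB, swap_apply pAC, h1, map_zero]
    rw [map_sub, map_smul, hz, smul_zero, sub_zero]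
    calc projP0 ZA (projP0 ZB (XB (projP0 ZC ψ)))
        = projP0 ZA (projP0 ZB (projP0 ZC (XB ψ))) := by rw [← swap_apply pCXB ψ]
      _ = projP0 ZB (projP0 ZA (projP0 ZC (XB ψ))) := swap_apply pAB _
      _ = projP0 ZB (projP0 ZC (projP0 ZA (XB ψ))) := by rw [swap_apply pAC (XB ψ)]
      _ = projP0 ZB (projP0 ZC (projP0 ZA (XC ψ))) := by rw [h4]
      _ = projP0 ZB (projP0 ZA (projP0 ZC (XC ψ))) := by rw [swap_apply pAC (XC ψ)]
      _ = projP0 ZA (projP0 ZB (projP0 ZC (XC ψ))) := (swap_apply pAB _).symm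
  · -- goal 3
    rw [keyeq ZA XA (projP0 ZB (projP0 ZC ψ))]
    have hz : (2:ℂ)⁻¹ • ((XA * ZA + ZA * XA) (projP0 ZB (projP0 ZC ψ))) = 0 := by
      rw [← swap_apply pBantiA, ← swap_apply pCantiA, swap_apply pBC (((XA * ZA + ZA * XA)) ψ),
        h3, map_zero, smul_zero]
    rw [hz, sub_zero]
    calc projP0 ZA (XA (projP0 ZB (projP0 ZC ψ)))
        = projP0 ZA (projP0 ZB (XA (projP0 ZC ψ))) := by rw [← swap_apply pBXA (projP0 ZC ψ)]
      _ = projP0 ZA (projP0 ZB (projP0 ZC (XA ψ))) := by rw [← swap_apply pCXA ψ]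
      _ = projP0 ZA (projP0 ZC (projP0 ZB (XA ψ))) := by rw [swap_apply pBC (XA ψ)]
      _ = projP0 ZA (projP0 ZC (projP0 ZB (XC ψ))) := by rw [h5]
      _ = projP0 ZA (projP0 ZB (projP0 ZC (XC ψ))) := by rw [← swap_apply pBC (XC ψ)]
end

section
/- Let α ≥ 0 be a real number and let a₀, a₁, b₀, b₁ be real numbers with |a₀| ≤ 1, |a₁| ≤ 1, |b₀| ≤ 1, |b₁| ≤ 1. Then α·a₀ + a₀·(b₀ + b₁) + a₁·(b₀ − b₁) ≤ 2 + α. -/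
theorem stmt8 (α a₀ a₁ b₀ b₁ : ℝ) (hα : 0 ≤ α)
    (ha₀ : |a₀| ≤ 1) (ha₁ : |a₁| ≤ 1) (hb₀ : |b₀| ≤ 1) (hb₁ : |b₁| ≤ 1) :
    α * a₀ + a₀ * (b₀ + b₁) + a₁ * (b₀ - b₁) ≤ 2 + α := by
  have h1 : a₀ * (b₀ + b₁) ≤ |b₀ + b₁| := by
    calc a₀ * (b₀ + b₁) ≤ |a₀ * (b₀ + b₁)| := le_abs_self _
    _ = |a₀| * |b₀ + b₁| := abs_mul _ _
    _ ≤ 1 * |b₀ + b₁| := by gcongr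
    _ = |b₀ + b₁| := one_mul _
  have h2 : a₁ * (b₀ - b₁) ≤ |b₀ - b₁| := by
    calc a₁ * (b₀ - b₁) ≤ |a₁ * (b₀ - b₁)| := le_abs_self _
    _ = |a₁| * |b₀ - b₁| := abs_mul _ _
    _ ≤ 1 * |b₀ - b₁| := by gcongr
    _ = |b₀ - b₁| := one_mul _
  have h3 : α * a₀ ≤ α := by nlinarith [(abs_le.mp ha₀).2]
  rw [abs_le] at hb₀ hb₁
  rcases abs_cases (b₀ + b₁) with ⟨e1, _⟩ | ⟨e1, _⟩ <;>
    rcases abs_cases (b₀ - b₁) with ⟨e2, _⟩ | ⟨e2, _⟩ <;> rw [e1] at h1 <;>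
    rw [e2] at h2 <;> linarith
end

section
/- Let H be a complex Hilbert space, ψ ∈ H a unit vector, t ≥ 0, and let Z_A, X_B, Z_B, D_C be binary observables on H such that Z_A commutes with X_B, Z_B, D_C, and D_C commutes with X_B and Z_B. Write P_A^0 = P⁰(Z_A). If ‖(P_A^0 D_C − (1/√2)·P_A^0 (X_B − Z_B)) ψ‖ ≤ t, then ‖P_A^0 (X_B Z_B + Z_B X_B) ψ‖ ≤ √2·(2 + 2√2)·t. -/
open scoped ComplexInnerProductSpace

/-! Put `S = (X_B - Z_B)/√2`, so that `S² = 1 - (X_B Z_B + Z_B X_B)/2`, and `E = P_A^0 (D_C - S)`.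
Since `P_A^0`, `D_C` and `S` pairwise commute and `D_C² = 1`,
`(D_C + S) E = P_A^0 (D_C² - S²) = P_A^0 (X_B Z_B + Z_B X_B)/2`.
As `‖D_C + S‖ ≤ 1 + √2` and `‖E ψ‖ ≤ t`, the anticommutator is at most `2 (1 + √2) t` on `ψ`. -/

section Algebra

variable {R : Type*} [Ring R]

theorem sub_mul_self_of_mul_self_eq_one {x z : R} (hx : x * x = 1) (hz : z * z = 1) :
    (x - z) * (x - z) = 2 - (x * z + z * x) := by
  rw [sub_mul, mul_sub, mul_sub, hx, hz, ← one_add_one_eq_two]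
  abel

theorem one_sub_smul_sub_mul_self [Algebra ℝ R] {x z : R} (hx : x * x = 1) (hz : z * z = 1) :
    1 - ((√2)⁻¹ • (x - z)) * ((√2)⁻¹ • (x - z)) = (2⁻¹ : ℝ) • (x * z + z * x) := by
  rw [smul_mul_smul, sub_mul_self_of_mul_self_eq_one hx hz, ← mul_inv,
    Real.mul_self_sqrt zero_le_two, ← one_add_one_eq_two (R := R), ← two_smul ℝ (1 : R)]
  module

theorem add_mul_mul_sub_of_commute {p d s : R} (hpd : Commute p d) (hps : Commute p s)
    (hds : Commute d s) : (d + s) * (p * (d - s)) = p * (d * d - s * s) := by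
  rw [← mul_assoc, ← (hpd.add_right hps).eq, mul_assoc, hds.mul_self_sub_mul_self_eq]

end Algebra

section Observables

variable {H : Type*} [NormedAddCommGroup H] [InnerProductSpace ℂ H]

theorem Commute.projP0_left {Z A : H →L[ℂ] H} (h : Commute Z A) : Commute (projP0 Z) A :=
  ((Commute.one_left A).add_left h).smul_left _

variable [CompleteSpace H]

theorem IsBinaryObservable.mul_self {A : H →L[ℂ] H} (hA : IsBinaryObservable A) : A * A = 1 :=
  hA.mul_self_eq_one

theorem IsBinaryObservable.norm_map {A : H →L[ℂ] H} (hA : IsBinaryObservable A) (v : H) :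
    ‖A v‖ = ‖v‖ :=
  A.norm_map_iff_adjoint_comp_self.mpr
    (by rw [← ContinuousLinearMap.star_eq_adjoint, hA.selfAdjoint.star_eq]; exact hA.mul_self) v

theorem IsBinaryObservable.norm_smul_sub_apply_le {X Z : H →L[ℂ] H} (hX : IsBinaryObservable X)
    (hZ : IsBinaryObservable Z) (v : H) : ‖((√2)⁻¹ • (X - Z)) v‖ ≤ √2 * ‖v‖ :=
  calc ‖((√2)⁻¹ • (X - Z)) v‖ = (√2)⁻¹ * ‖X v - Z v‖ := by
        rw [smul_apply, norm_smul, norm_inv, Real.norm_of_nonneg (Real.sqrt_nonneg 2), sub_apply]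
    _ ≤ (√2)⁻¹ * (‖X v‖ + ‖Z v‖) := by gcongr; exact norm_sub_le _ _
    _ = √2 * ‖v‖ := by
        rw [hX.norm_map, hZ.norm_map, ← two_mul, ← mul_assoc, inv_mul_eq_div, Real.div_sqrt]

end Observables

theorem stmt15_general {H : Type*} [NormedAddCommGroup H] [InnerProductSpace ℂ H] [CompleteSpace H]
    (ψ : H) (t : ℝ)
    (ZA XB ZB DC : H →L[ℂ] H)
    (hXB : IsBinaryObservable XB)
    (hZB : IsBinaryObservable ZB) (hDC : IsBinaryObservable DC)
    (hA1 : Commute ZA XB) (hA2 : Commute ZA ZB) (hA3 : Commute ZA DC)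
    (hD1 : Commute DC XB) (hD2 : Commute DC ZB)
    (h : ‖projP0 ZA (DC ψ) - (Real.sqrt 2)⁻¹ • projP0 ZA ((XB - ZB) ψ)‖ ≤ t) :
    ‖projP0 ZA ((XB * ZB + ZB * XB) ψ)‖ ≤ Real.sqrt 2 * (2 + 2 * Real.sqrt 2) * t := by
  set P := projP0 ZA
  set S : H →L[ℂ] H := (√2)⁻¹ • (XB - ZB)
  have hPD : Commute P DC := hA3.projP0_left
  have hPS : Commute P S := (hA1.projP0_left.sub_right hA2.projP0_left).smul_right _
  have hDS : Commute DC S := (hD1.sub_right hD2).smul_right _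
  have key : P * (XB * ZB + ZB * XB) = (2 : ℝ) • ((DC + S) * (P * (DC - S))) := by
    rw [add_mul_mul_sub_of_commute hPD hPS hDS, hDC.mul_self,
      one_sub_smul_sub_mul_self hXB.mul_self hZB.mul_self, mul_smul_comm, smul_smul]
    norm_num
  set e := P ((DC - S) ψ)
  have he : ‖e‖ ≤ t := by simpa [e, S, ContinuousLinearMap.map_smul_of_tower] using h
  calc ‖P ((XB * ZB + ZB * XB) ψ)‖ = 2 * ‖DC e + S e‖ := by
        rw [← mul_apply_eq_comp, key, smul_apply, mul_apply_eq_comp, mul_apply_eq_comp, add_apply,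
          norm_smul, Real.norm_two]
    _ ≤ 2 * (‖DC e‖ + ‖S e‖) := by gcongr; exact norm_add_le _ _
    _ ≤ 2 * (‖e‖ + √2 * ‖e‖) := by
        rw [hDC.norm_map]
        gcongr
        exact hXB.norm_smul_sub_apply_le hZB e
    _ ≤ √2 * (2 + 2 * √2) * t := by
        nlinarith [Real.mul_self_sqrt zero_le_two, Real.sqrt_nonneg 2, norm_nonneg e]

theorem stmt15 {H : Type*} [NormedAddCommGroup H] [InnerProductSpace ℂ H] [CompleteSpace H]
    (ψ : H) (hψ : ‖ψ‖ = 1) (t : ℝ) (ht : 0 ≤ t)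
    (ZA XB ZB DC : H →L[ℂ] H)
    (hZA : IsBinaryObservable ZA) (hXB : IsBinaryObservable XB)
    (hZB : IsBinaryObservable ZB) (hDC : IsBinaryObservable DC)
    (hA1 : Commute ZA XB) (hA2 : Commute ZA ZB) (hA3 : Commute ZA DC)
    (hD1 : Commute DC XB) (hD2 : Commute DC ZB)
    (h : ‖projP0 ZA (DC ψ) - (Real.sqrt 2)⁻¹ • projP0 ZA ((XB - ZB) ψ)‖ ≤ t) :
    ‖projP0 ZA ((XB * ZB + ZB * XB) ψ)‖ ≤ Real.sqrt 2 * (2 + 2 * Real.sqrt 2) * t :=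
  stmt15_general ψ t ZA XB ZB DC hXB hZB hDC hA1 hA2 hA3 hD1 hD2 h
end

section
/- Let H be a complex Hilbert space, ψ ∈ H, δ ≥ 0, and let Z_A, Z_B, X_C, Z_C be binary observables on H such that Z_A commutes with Z_B, X_C, Z_C, and Z_B commutes with X_C and Z_C, and X_C commutes with Z_A and Z_B. Write P_Q^0 = P⁰(Z_Q) and P_Q^1 = P¹(Z_Q). If ‖P_A^0 (X_C Z_C + Z_C X_C) ψ‖ ≤ δ, then ‖P_A^0 P_B^0 X_C P_C^1 ψ − P_A^0 P_B^0 P_C^0 X_C ψ‖ ≤ δ/2. -/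
open scoped ComplexInnerProductSpace

lemma norm_binobs_apply {H : Type*} [NormedAddCommGroup H] [InnerProductSpace ℂ H]
    [CompleteSpace H] {Z : H →L[ℂ] H} (hZ : IsBinaryObservable Z) (x : H) :
    ‖Z x‖ = ‖x‖ := by
  have h1 : ⟪Z x, Z x⟫ = ⟪x, x⟫ := by
    have := hZ.selfAdjoint
    rw [ContinuousLinearMap.isSelfAdjoint_iff'] at this
    calc ⟪Z x, Z x⟫ = ⟪x, (ContinuousLinearMap.adjoint Z) (Z x)⟫ := by
          rw [ContinuousLinearMap.adjoint_inner_right]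
      _ = ⟪x, (Z ∘L Z) x⟫ := by rw [this]; rfl
      _ = ⟪x, x⟫ := by rw [hZ.mul_self_eq_one]; rfl
  rw [inner_self_eq_norm_sq_to_K, inner_self_eq_norm_sq_to_K] at h1
  have h2 : ‖Z x‖ ^ 2 = ‖x‖ ^ 2 := by exact_mod_cast h1
  nlinarith [norm_nonneg (Z x), norm_nonneg x, sq_nonneg (‖Z x‖ - ‖x‖), sq_nonneg (‖Z x‖ + ‖x‖)]

lemma norm_projP0_apply_le {H : Type*} [NormedAddCommGroup H] [InnerProductSpace ℂ H]
    [CompleteSpace H] {Z : H →L[ℂ] H} (hZ : IsBinaryObservable Z) (x : H) :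
    ‖projP0 Z x‖ ≤ ‖x‖ := by
  have : projP0 Z x = (2:ℂ)⁻¹ • (x + Z x) := by
    simp [projP0]
  rw [this]
  calc ‖(2:ℂ)⁻¹ • (x + Z x)‖ = 2⁻¹ * ‖x + Z x‖ := by
        rw [norm_smul]; norm_num
    _ ≤ 2⁻¹ * (‖x‖ + ‖Z x‖) := by
        gcongr; exact norm_add_le _ _
    _ = ‖x‖ := by rw [norm_binobs_apply hZ]; ring

set_option maxHeartbeats 1000000 in
theorem stmt16 {H : Type*} [NormedAddCommGroup H] [InnerProductSpace ℂ H] [CompleteSpace H]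
    (ψ : H) (δ : ℝ) (hδ : 0 ≤ δ)
    (ZA ZB XC ZC : H →L[ℂ] H)
    (hZA : IsBinaryObservable ZA) (hZB : IsBinaryObservable ZB)
    (hXC : IsBinaryObservable XC) (hZC : IsBinaryObservable ZC)
    (hA1 : Commute ZA ZB) (hA2 : Commute ZA XC) (hA3 : Commute ZA ZC)
    (hB1 : Commute ZB XC) (hB2 : Commute ZB ZC)
    (h : ‖projP0 ZA ((XC * ZC + ZC * XC) ψ)‖ ≤ δ) :
    ‖projP0 ZA (projP0 ZB (XC (projP1 ZC ψ))) -
      projP0 ZA (projP0 ZB (projP0 ZC (XC ψ)))‖ ≤ δ / 2 := by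
  have key : projP0 ZA (projP0 ZB (XC (projP1 ZC ψ))) -
      projP0 ZA (projP0 ZB (projP0 ZC (XC ψ))) =
      (-(2:ℂ)⁻¹) • projP0 ZB (projP0 ZA ((XC * ZC + ZC * XC) ψ)) := by
    have hop : projP0 ZA * (projP0 ZB * (XC * projP1 ZC)) -
        projP0 ZA * (projP0 ZB * (projP0 ZC * XC)) =
        (-(2:ℂ)⁻¹) • (projP0 ZB * (projP0 ZA * (XC * ZC + ZC * XC))) := by
      simp only [projP0, projP1]
      have c1 := hA1.eq
      have c2 := hA2.eq
      have c3 := hA3.eq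
      have c4 := hB1.eq
      have c5 := hB2.eq
      noncomm_ring
      have d1 : ∀ m : H →L[ℂ] H, ZA * (ZB * m) = ZB * (ZA * m) := fun m => by
        rw [← mul_assoc, c1, mul_assoc]
      simp only [d1]
      match_scalars <;> norm_num

    have := congrArg (fun T : H →L[ℂ] H => T ψ) hop
    simpa [add_comm] using this
  rw [key, norm_smul]
  have h2 : ‖(-(2:ℂ)⁻¹)‖ = 2⁻¹ := by norm_num
  rw [h2]
  have := norm_projP0_apply_le hZB (projP0 ZA ((XC * ZC + ZC * XC) ψ))
  nlinarith [norm_nonneg (projP0 ZB (projP0 ZA ((XC * ZC + ZC * XC) ψ)))]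
end

section
/- Let H be a complex Hilbert space, let I be a finite index set partitioned as I = S ∪ T with S = {s₁, s₂, s₃} of cardinality 3, let v : I → H be a family of vectors, let χ ∈ H with χ ≠ 0, and let δ, δ₂, η be real numbers with δ, δ₂ ≥ 0 and 0 ≤ η ≤ 1. Define w : I → H by w(i) = χ / (√3·‖χ‖) for i ∈ S and w(i) = 0 for i ∈ T. Assume: ‖v(i) − χ‖ ≤ δ for each i ∈ S; Σ_{i∈T} ‖v(i)‖ ≤ δ₂; and |3‖χ‖² − 1| ≤ η. Then √(Σ_{i∈I} ‖v(i) − w(i)‖²) ≤ 3δ + δ₂ + 1 − √(1 − η). -/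
set_option maxHeartbeats 1000000 in
theorem stmt18 {H : Type*} [NormedAddCommGroup H] [InnerProductSpace ℂ H]
    {I : Type*} [Fintype I] [DecidableEq I]
    (S T : Finset I) (hpart : S ∪ T = Finset.univ) (hdisj : Disjoint S T)
    (s₁ s₂ s₃ : I) (hS : S = {s₁, s₂, s₃}) (hcard : S.card = 3)
    (v : I → H) (χ : H) (hχ : χ ≠ 0)
    (δ δ₂ η : ℝ) (hδ : 0 ≤ δ) (hδ₂ : 0 ≤ δ₂) (hη0 : 0 ≤ η) (hη1 : η ≤ 1)
    (w : I → H)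
    (hw : ∀ i, w i = if i ∈ S then (Real.sqrt 3 * ‖χ‖)⁻¹ • χ else 0)
    (hvS : ∀ i ∈ S, ‖v i - χ‖ ≤ δ)
    (hvT : ∑ i ∈ T, ‖v i‖ ≤ δ₂)
    (hχnorm : |3 * ‖χ‖ ^ 2 - 1| ≤ η) :
    Real.sqrt (∑ i, ‖v i - w i‖ ^ 2) ≤ 3 * δ + δ₂ + 1 - Real.sqrt (1 - η) := by
  set r := Real.sqrt (1 - η) with hrdef
  have hr0 : 0 ≤ r := Real.sqrt_nonneg _
  have hrsq : r ^ 2 = 1 - η := Real.sq_sqrt (by linarith)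
  have hr1 : r ≤ 1 := by nlinarith
  have hχn : 0 < ‖χ‖ := norm_pos_iff.mpr hχ
  have h3 : (0:ℝ) < Real.sqrt 3 := Real.sqrt_pos.mpr (by norm_num)
  have h3sq : Real.sqrt 3 ^ 2 = 3 := Real.sq_sqrt (by norm_num)
  have h31 : (1:ℝ) ≤ Real.sqrt 3 := by nlinarith
  have h1 : 1 - η ≤ 3 * ‖χ‖ ^ 2 := by have := (abs_le.mp hχnorm).1; linarith
  have h2 : 3 * ‖χ‖ ^ 2 ≤ 1 + η := by have := (abs_le.mp hχnorm).2; linarith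
  -- lower bound: r ≤ √3 * ‖χ‖
  have hlow : r ≤ Real.sqrt 3 * ‖χ‖ := by
    have : r ≤ Real.sqrt (3 * ‖χ‖ ^ 2) := Real.sqrt_le_sqrt h1
    rwa [show (3:ℝ) * ‖χ‖ ^ 2 = (Real.sqrt 3 * ‖χ‖) ^ 2 by nlinarith,
      Real.sqrt_sq (by positivity)] at this
  -- upper bound: √3 * ‖χ‖ ≤ 2 - r
  have hup : Real.sqrt 3 * ‖χ‖ ≤ 2 - r := by
    have h2r : 2 * r ≤ 2 - η := by nlinarith
    have : Real.sqrt 3 * ‖χ‖ = Real.sqrt (3 * ‖χ‖ ^ 2) := by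
      rw [show (3:ℝ) * ‖χ‖ ^ 2 = (Real.sqrt 3 * ‖χ‖) ^ 2 by nlinarith,
        Real.sqrt_sq (by positivity)]
    rw [this]
    have : Real.sqrt (3 * ‖χ‖ ^ 2) ≤ Real.sqrt ((2 - r) ^ 2) :=
      Real.sqrt_le_sqrt (by nlinarith)
    rwa [Real.sqrt_sq (by linarith)] at this
  -- the constant c
  set c : ℝ := (1 - r) / Real.sqrt 3 with hcdef
  have hc0 : 0 ≤ c := div_nonneg (by linarith) h3.le
  have hc3 : c * Real.sqrt 3 = 1 - r := div_mul_cancel₀ _ h3.ne'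
  have hinv : (Real.sqrt 3)⁻¹ * Real.sqrt 3 = 1 := inv_mul_cancel₀ h3.ne'
  have hkey : |‖χ‖ - (Real.sqrt 3)⁻¹| ≤ c := by
    rw [abs_le]
    constructor
    · have h' : -c * Real.sqrt 3 ≤ (‖χ‖ - (Real.sqrt 3)⁻¹) * Real.sqrt 3 := by
        rw [neg_mul, hc3, sub_mul, hinv]
        have := mul_comm ‖χ‖ (Real.sqrt 3)
        linarith [hlow]
      exact le_of_mul_le_mul_right h' h3
    · have h' : (‖χ‖ - (Real.sqrt 3)⁻¹) * Real.sqrt 3 ≤ c * Real.sqrt 3 := by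
        rw [hc3, sub_mul, hinv]
        have := mul_comm ‖χ‖ (Real.sqrt 3)
        linarith [hup]
      exact le_of_mul_le_mul_right h' h3
  -- key bound on ‖χ - w i‖ for i ∈ S
  have hwS : ∀ i ∈ S, ‖χ - w i‖ ≤ c := by
    intro i hi
    rw [hw i, if_pos hi]
    have heq : χ - (Real.sqrt 3 * ‖χ‖)⁻¹ • χ
        = (1 - ((Real.sqrt 3 * ‖χ‖)⁻¹ : ℝ)) • χ := by rw [sub_smul, one_smul]
    rw [heq, norm_smul, Real.norm_eq_abs]
    have habs : |1 - (Real.sqrt 3 * ‖χ‖)⁻¹| * ‖χ‖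
        = |(1 - (Real.sqrt 3 * ‖χ‖)⁻¹) * ‖χ‖| := by
      rw [abs_mul, abs_of_nonneg hχn.le]
    have hmul : (1 - (Real.sqrt 3 * ‖χ‖)⁻¹) * ‖χ‖ = ‖χ‖ - (Real.sqrt 3)⁻¹ := by
      rw [sub_mul, one_mul, mul_inv, mul_assoc, inv_mul_cancel₀ hχn.ne', mul_one]
    rw [habs, hmul]
    exact hkey
  -- each term in S bounded
  have hterm : ∀ i ∈ S, ‖v i - w i‖ ≤ δ + c := by
    intro i hi
    calc ‖v i - w i‖ = ‖(v i - χ) + (χ - w i)‖ := by rw [sub_add_sub_cancel]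
      _ ≤ ‖v i - χ‖ + ‖χ - w i‖ := norm_add_le _ _
      _ ≤ δ + c := add_le_add (hvS i hi) (hwS i hi)
  -- sum over S
  have hsumS : ∑ i ∈ S, ‖v i - w i‖ ^ 2 ≤ 3 * (δ + c) ^ 2 := by
    calc ∑ i ∈ S, ‖v i - w i‖ ^ 2 ≤ ∑ i ∈ S, (δ + c) ^ 2 := by
          apply Finset.sum_le_sum
          intro i hi
          have := hterm i hi
          nlinarith [norm_nonneg (v i - w i)]
      _ = 3 * (δ + c) ^ 2 := by rw [Finset.sum_const, hcard]; ring
  -- sum over T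
  have hwT : ∀ i ∈ T, w i = 0 := by
    intro i hi
    rw [hw i, if_neg (fun hiS => (Finset.disjoint_left.mp hdisj) hiS hi)]
  have hsumT : ∑ i ∈ T, ‖v i - w i‖ ^ 2 ≤ δ₂ ^ 2 := by
    have heq : ∑ i ∈ T, ‖v i - w i‖ ^ 2 = ∑ i ∈ T, ‖v i‖ ^ 2 :=
      Finset.sum_congr rfl (fun i hi => by rw [hwT i hi, sub_zero])
    rw [heq]
    calc ∑ i ∈ T, ‖v i‖ ^ 2 ≤ (∑ i ∈ T, ‖v i‖) ^ 2 :=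
          Finset.sum_sq_le_sq_sum_of_nonneg (fun i _ => norm_nonneg _)
      _ ≤ δ₂ ^ 2 :=
          pow_le_pow_left₀ (Finset.sum_nonneg (fun i _ => norm_nonneg _)) hvT 2
  -- combine
  have hsplit : ∑ i, ‖v i - w i‖ ^ 2 = ∑ i ∈ S, ‖v i - w i‖ ^ 2 + ∑ i ∈ T, ‖v i - w i‖ ^ 2 := by
    rw [← Finset.sum_union hdisj, hpart]
  have hA : 3 * (δ + c) ^ 2 ≤ (3 * δ + (1 - r)) ^ 2 := by
    nlinarith [mul_nonneg hδ hc0, sq_nonneg c, sq_nonneg (δ + c)]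
  have hA0 : 0 ≤ 3 * δ + (1 - r) := by linarith
  have htot : ∑ i, ‖v i - w i‖ ^ 2 ≤ (3 * δ + (1 - r) + δ₂) ^ 2 := by
    rw [hsplit]
    nlinarith [mul_nonneg hA0 hδ₂]
  calc Real.sqrt (∑ i, ‖v i - w i‖ ^ 2) ≤ Real.sqrt ((3 * δ + (1 - r) + δ₂) ^ 2) :=
        Real.sqrt_le_sqrt htot
    _ = 3 * δ + (1 - r) + δ₂ := Real.sqrt_sq (by linarith)
    _ = 3 * δ + δ₂ + 1 - r := by ring
end
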